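/- arXiv:2310.05252 — 5 statements merged into one kernel-verified Lean document; each statement's English description precedes it below -/
import Mathlib

section
/- Suppose the MPDA rule D^M is manipulable at profile P by a coalition A' via misreports P̃_{A'}. Then every woman weakly prefers her match at the manipulated profile to her match at the true profile: D^M_w(P̃_{A'}, P_{-A'}) R_w D^M_w(P) for all women w (with respect to true preferences). -/
/-- A one-to-one matching between men `M` and women `W`; `none` means unmatched. -/
structure Matching (M W : Type*) where
  menMatch : M → Option W
  womenMatch : W → Option M
  consistent : ∀ m w, menMatch m = some w ↔ womenMatch w = some m

/-- A preference profile: each man has a strict linear order over `W ∪ {∅}`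
(encoded as `Option W`, with `none` the outside option), and each woman over `M ∪ {∅}`. -/
structure Profile (M W : Type*) where
  menPref : M → LinearOrder (Option W)
  womenPref : W → LinearOrder (Option M)

variable {M W : Type*}

def IndividuallyRational (μ : Matching M W) (P : Profile M W) : Prop :=
  (∀ m, (P.menPref m).le none (μ.menMatch m)) ∧
  (∀ w, (P.womenPref w).le none (μ.womenMatch w))

def Blocks (m : M) (w : W) (μ : Matching M W) (P : Profile M W) : Prop :=
  (P.menPref m).lt (μ.menMatch m) (some w) ∧
  (P.womenPref w).lt (μ.womenMatch w) (some m)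

def Stable (μ : Matching M W) (P : Profile M W) : Prop :=
  IndividuallyRational μ P ∧ ∀ m w, ¬ Blocks m w μ P

/-- The men-optimal stable matching: stable, and every man weakly prefers it to
any stable matching.  This characterizes the outcome of the men-proposing
deferred acceptance (MPDA) algorithm. -/
def MenOptimalStable (μ : Matching M W) (P : Profile M W) : Prop :=
  Stable μ P ∧
    ∀ ν : Matching M W, Stable ν P → ∀ m, (P.menPref m).le (ν.menMatch m) (μ.menMatch m)

/-- The women-optimal stable matching, i.e. the outcome of women-proposing DA. -/
def WomenOptimalStable (μ : Matching M W) (P : Profile M W) : Prop :=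
  Stable μ P ∧
    ∀ ν : Matching M W, Stable ν P → ∀ w, (P.womenPref w).le (ν.womenMatch w) (μ.womenMatch w)

def Matching.empty (M W : Type*) : Matching M W :=
  ⟨fun _ => none, fun _ => none, by intro m w; simp⟩

/-- The men-proposing deferred acceptance rule `D^M`. -/
noncomputable def mpda (P : Profile M W) : Matching M W :=
  letI := Classical.dec (∃ μ : Matching M W, MenOptimalStable μ P)
  if h : ∃ μ : Matching M W, MenOptimalStable μ P then h.choose else Matching.empty M W

/-- The women-proposing deferred acceptance rule `D^W`. -/
noncomputable def wpda (P : Profile M W) : Matching M W :=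
  letI := Classical.dec (∃ μ : Matching M W, WomenOptimalStable μ P)
  if h : ∃ μ : Matching M W, WomenOptimalStable μ P then h.choose else Matching.empty M W

/-- A domain of preference profiles: a set of admissible preferences for each agent. -/
structure Domain (M W : Type*) where
  men : M → Set (LinearOrder (Option W))
  women : W → Set (LinearOrder (Option M))

/-- Membership of a profile in (the product domain generated by) a domain. -/
def Domain.mem (D : Domain M W) (P : Profile M W) : Prop :=
  (∀ m, P.menPref m ∈ D.men m) ∧ (∀ w, P.womenPref w ∈ D.women w)

def Profile.updateMan [DecidableEq M] (P : Profile M W) (m : M)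
    (p : LinearOrder (Option W)) : Profile M W :=
  ⟨Function.update P.menPref m p, P.womenPref⟩

def Profile.updateWoman [DecidableEq W] (P : Profile M W) (w : W)
    (p : LinearOrder (Option M)) : Profile M W :=
  ⟨P.menPref, Function.update P.womenPref w p⟩

/-- A matching rule is stable on a domain if it selects a stable matching at
every profile of the domain. -/
def StableOn (D : Domain M W) (φ : Profile M W → Matching M W) : Prop :=
  ∀ P, D.mem P → Stable (φ P) P

/-- Strategy-proofness on a domain: no single agent can strictly gain by
misreporting an admissible preference. -/
def StrategyProofOn [DecidableEq M] [DecidableEq W] (D : Domain M W)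
    (φ : Profile M W → Matching M W) : Prop :=
  ∀ P, D.mem P →
    (∀ m p, p ∈ D.men m →
      (P.menPref m).le ((φ (P.updateMan m p)).menMatch m) ((φ P).menMatch m)) ∧
    (∀ w p, p ∈ D.women w →
      (P.womenPref w).le ((φ (P.updateWoman w p)).womenMatch w) ((φ P).womenMatch w))

/-- A coalition `(Sm, Sw)` manipulates `φ` at `P` via the admissible profile `Q`
(which agrees with `P` outside the coalition): every coalition member is
strictly better off at `φ Q` than at `φ P` according to true preferences. -/
def Manipulation (D : Domain M W) (φ : Profile M W → Matching M W)
    (P Q : Profile M W) (Sm : Set M) (Sw : Set W) : Prop :=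
  D.mem P ∧ D.mem Q ∧
  (∀ m ∉ Sm, Q.menPref m = P.menPref m) ∧
  (∀ w ∉ Sw, Q.womenPref w = P.womenPref w) ∧
  (∀ m ∈ Sm, (P.menPref m).lt ((φ P).menMatch m) ((φ Q).menMatch m)) ∧
  (∀ w ∈ Sw, (P.womenPref w).lt ((φ P).womenMatch w) ((φ Q).womenMatch w))

/-- Group strategy-proofness on a domain: no nonempty coalition can manipulate. -/
def GroupStrategyProofOn (D : Domain M W) (φ : Profile M W → Matching M W) : Prop :=
  ¬ ∃ (P Q : Profile M W) (Sm : Set M) (Sw : Set W),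
      (Sm.Nonempty ∨ Sw.Nonempty) ∧ Manipulation D φ P Q Sm Sw

/-- Top dominance for women. -/
def TopDominanceWomen (D : Domain M W) : Prop :=
  ∀ w : W, ∀ x : M, ∀ y z : Option M,
    (∃ P ∈ D.women w, P.lt y (some x) ∧ P.lt z y ∧ P.le none y) →
      ¬ ∃ P' ∈ D.women w, P'.lt z (some x) ∧ P'.lt y z ∧ P'.le none z

/-- Top dominance for men. -/
def TopDominanceMen (D : Domain M W) : Prop :=
  ∀ m : M, ∀ x : W, ∀ y z : Option W,
    (∃ P ∈ D.men m, P.lt y (some x) ∧ P.lt z y ∧ P.le none y) →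
      ¬ ∃ P' ∈ D.men m, P'.lt z (some x) ∧ P'.lt y z ∧ P'.le none z

/-- Unrestricted top pairs for men. -/
def UnrestrictedTopPairsMen (D : Domain M W) : Prop :=
  ∀ m : M,
    (∀ w w' : W, w ≠ w' → ∃ P ∈ D.men m, P.lt (some w') (some w) ∧
        ∀ z : Option W, z ≠ some w → z ≠ some w' → P.lt z (some w')) ∧
    (∀ w : W, ∃ P ∈ D.men m, P.lt none (some w) ∧
        ∀ z : Option W, z ≠ some w → z ≠ none → P.lt z none) ∧
    (∃ P ∈ D.men m, ∀ z : Option W, z ≠ none → P.lt z none)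

/-- Unrestricted top pairs for women. -/
def UnrestrictedTopPairsWomen (D : Domain M W) : Prop :=
  ∀ w : W,
    (∀ m m' : M, m ≠ m' → ∃ P ∈ D.women w, P.lt (some m') (some m) ∧
        ∀ z : Option M, z ≠ some m → z ≠ some m' → P.lt z (some m')) ∧
    (∀ m : M, ∃ P ∈ D.women w, P.lt none (some m) ∧
        ∀ z : Option M, z ≠ some m → z ≠ none → P.lt z none) ∧
    (∃ P ∈ D.women w, ∀ z : Option M, z ≠ none → P.lt z none)

/-- Single-peakedness of a preference over `Option α` with respect to a prior
order `ord` on `α`:  moving away from the peak (the most preferred element of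
`α`) on either side makes the preference decline. -/
def SinglePeaked {α : Type*} (ord : LinearOrder α) (P : LinearOrder (Option α)) : Prop :=
  ∀ peak : α, (∀ a : α, P.le (some a) (some peak)) →
    ∀ a b : α, ((ord.le peak a ∧ ord.lt a b) ∨ (ord.lt b a ∧ ord.le a peak)) →
      P.lt (some b) (some a)

/-- The maximal single-peaked domain with respect to orders on men and women. -/
def maximalSinglePeakedDomain (ordM : LinearOrder M) (ordW : LinearOrder W) : Domain M W :=
  ⟨fun _ => {P | SinglePeaked ordW P}, fun _ => {P | SinglePeaked ordM P}⟩

/-- A domain is single-peaked if all admissible preferences are single-peaked. -/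
def Domain.SinglePeakedDomain (D : Domain M W) (ordM : LinearOrder M)
    (ordW : LinearOrder W) : Prop :=
  (∀ m, ∀ P ∈ D.men m, SinglePeaked ordW P) ∧ (∀ w, ∀ P ∈ D.women w, SinglePeaked ordM P)

/-- Anonymity: all men share the same admissible set, and all women do too. -/
def Domain.Anonymous (D : Domain M W) : Prop :=
  (∀ m m' : M, D.men m = D.men m') ∧ (∀ w w' : W, D.women w = D.women w')

/-- Cyclical inclusion for men. -/
def CyclicalInclusionMen (D : Domain M W) : Prop :=
  ∀ m : M,
    (∃ P ∈ D.men m, ∀ z : Option W, z ≠ none → P.lt z none) ∧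
    (∀ w w' : W,
      (∃ P ∈ D.men m, P.lt (some w') (some w) ∧ P.lt none (some w')) →
      (∃ P ∈ D.men m, P.lt (some w) (some w') ∧ P.lt none (some w)))

/-- Cyclical inclusion for women. -/
def CyclicalInclusionWomen (D : Domain M W) : Prop :=
  ∀ w : W,
    (∃ P ∈ D.women w, ∀ z : Option M, z ≠ none → P.lt z none) ∧
    (∀ m m' : M,
      (∃ P ∈ D.women w, P.lt (some m') (some m) ∧ P.lt none (some m')) →
      (∃ P ∈ D.women w, P.lt (some m) (some m') ∧ P.lt none (some m)))

/-- The unrestricted domain: every strict linear order is admissible. -/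
def fullDomain (M W : Type*) : Domain M W :=
  ⟨fun _ => Set.univ, fun _ => Set.univ⟩


/-- A coalition `(Sm, Sw)` manipulates the MPDA rule at `P` via the misreport
profile `Q` (which agrees with `P` outside the coalition): every coalition
member is strictly better off under true preferences. -/
def MpdaManipulates (P Q : Profile M W) (Sm : Set M) (Sw : Set W) : Prop :=
  (∀ m ∉ Sm, Q.menPref m = P.menPref m) ∧
  (∀ w ∉ Sw, Q.womenPref w = P.womenPref w) ∧
  (∀ m ∈ Sm, (P.menPref m).lt ((mpda P).menMatch m) ((mpda Q).menMatch m)) ∧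
  (∀ w ∈ Sw, (P.womenPref w).lt ((mpda P).womenMatch w) ((mpda Q).womenMatch w))

/-!
Let `μ = D^M(P)` and `ν = D^M(Q)`, and suppose some woman `w` strictly prefers `μ` to `ν`. She is
then outside the coalition, and since `ν` is stable for `Q` her `μ`-partner strictly prefers `ν`
to `μ`. As `ν` is individually rational for the true preferences, the blocking lemma of Gale and
Sotomayor gives a pair `(m₁, w₁)` blocking `ν` for `P` in which `m₁` does not prefer `ν` to `μ`
and `w₁` is the `ν`-partner of a man who does. By stability of `μ`, `w₁` is worse off under `ν`, so
neither `m₁` nor `w₁` belongs to the coalition, and the pair blocks `ν` for `Q` as well.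

The blocking lemma rests on the men-proposing deferred acceptance algorithm, whose outcome is the
men-optimal stable matching: in the case where the men preferring `ν` are matched by `μ` and by
`ν` to the same women, the woman receiving the last proposal made by one of these men rejects a man
who does not prefer `ν`, and he blocks `ν` with her.
-/

namespace LinearOrder

variable {α : Type*} (L : LinearOrder α) {a b c : α}

theorem lt_irrefl (a : α) : ¬ L.lt a a := letI := L; _root_.lt_irrefl a

theorem lt_asymm (h : L.lt a b) : ¬ L.lt b a := letI := L; _root_.lt_asymm h

theorem le_of_lt (h : L.lt a b) : L.le a b := letI := L; h.le

theorem not_lt : ¬ L.lt a b ↔ L.le b a := letI := L; _root_.not_lt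

theorem not_le : ¬ L.le a b ↔ L.lt b a := letI := L; _root_.not_le

theorem lt_of_le_of_ne (h₁ : L.le a b) (h₂ : a ≠ b) : L.lt a b := letI := L; h₁.lt_of_ne h₂

theorem lt_of_le_of_lt (h₁ : L.le a b) (h₂ : L.lt b c) : L.lt a c := letI := L; h₁.trans_lt h₂

theorem lt_of_lt_of_le (h₁ : L.lt a b) (h₂ : L.le b c) : L.lt a c := letI := L; h₁.trans_le h₂

theorem exists_greatest [Finite α] (s : Set α) (hs : s.Nonempty) :
    ∃ a ∈ s, ∀ b ∈ s, L.le b a :=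
  letI := L; s.exists_max_image id s.toFinite hs

end LinearOrder

namespace Matching

variable {μ ν : Matching M W} {m m' : M} {w : W}

theorem eq_of_menMatch_eq_some (h : μ.menMatch m = some w) (h' : μ.menMatch m' = some w) :
    m = m' :=
  Option.some_injective _ (((μ.consistent m w).1 h).symm.trans ((μ.consistent m' w).1 h'))

theorem ext_menMatch (h : ∀ m, μ.menMatch m = ν.menMatch m) : μ = ν := by
  obtain ⟨f, g, hfg⟩ := μ
  obtain ⟨f', g', hfg'⟩ := ν
  obtain rfl : f = f' := funext h
  obtain rfl : g = g' := funext fun w => Option.ext fun m => (hfg m w).symm.trans (hfg' m w)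
  rfl

theorem image_menMatch_eq_of_subset [Finite M] {A : Set M} (hν : ∀ m ∈ A, ν.menMatch m ≠ none)
    (hsub : ν.menMatch '' A ⊆ μ.menMatch '' A) : ν.menMatch '' A = μ.menMatch '' A := by
  have hinj : Set.InjOn ν.menMatch A := fun a ha b _ hab => by
    obtain ⟨w, hw⟩ := Option.ne_none_iff_exists'.1 (hν a ha)
    exact ν.eq_of_menMatch_eq_some hw (hab ▸ hw)
  refine Set.eq_of_subset_of_ncard_le hsub ?_ (Set.toFinite _)
  rw [hinj.ncard_image]
  exact Set.ncard_image_le (Set.toFinite A)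

end Matching

def improvingMen (P : Profile M W) (μ ν : Matching M W) : Set M :=
  {m | (P.menPref m).lt (μ.menMatch m) (ν.menMatch m)}

section Stability

variable {P : Profile M W} {μ ν : Matching M W} {m m₁ : M} {w : W}

theorem Stable.lt_womenMatch (hμ : Stable μ P) (h : (P.menPref m).lt (μ.menMatch m) (some w)) :
    (P.womenPref w).lt (some m) (μ.womenMatch w) := by
  refine (P.womenPref w).lt_of_le_of_ne ((P.womenPref w).not_lt.1 fun hw => hμ.2 m w ⟨h, hw⟩) ?_
  intro he
  rw [(μ.consistent m w).2 he.symm] at h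
  exact (P.menPref m).lt_irrefl _ h

theorem Stable.lt_menMatch (hμ : Stable μ P) (h : (P.womenPref w).lt (μ.womenMatch w) (some m)) :
    (P.menPref m).lt (some w) (μ.menMatch m) := by
  refine (P.menPref m).lt_of_le_of_ne ((P.menPref m).not_lt.1 fun hm => hμ.2 m w ⟨hm, h⟩) ?_
  intro he
  rw [(μ.consistent m w).1 he.symm] at h
  exact (P.womenPref w).lt_irrefl _ h

theorem IndividuallyRational.ne_none_of_mem_improvingMen (hμ : IndividuallyRational μ P)
    (hm : m ∈ improvingMen P μ ν) : ν.menMatch m ≠ none := fun h =>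
  (P.menPref m).lt_irrefl _ ((P.menPref m).lt_of_le_of_lt (hμ.1 m) (h ▸ hm))

theorem Stable.blocks_of_mem_improvingMen (hμ : Stable μ P) (hm : m ∈ improvingMen P μ ν)
    (hν : ν.menMatch m = some w) (hμw : μ.womenMatch w = some m₁)
    (hm₁ : m₁ ∉ improvingMen P μ ν) : Blocks m₁ w ν P := by
  have hw : (P.womenPref w).lt (some m) (some m₁) := hμw ▸ hμ.lt_womenMatch (hν ▸ hm)
  refine ⟨(P.menPref m₁).lt_of_le_of_ne ?_ fun h => ?_, by rwa [(ν.consistent m w).1 hν]⟩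
  · rw [← (μ.consistent m₁ w).2 hμw]
    exact (P.menPref m₁).not_lt.1 hm₁
  · exact hm₁ (ν.eq_of_menMatch_eq_some hν h ▸ hm)

theorem MenOptimalStable.unique (hμ : MenOptimalStable μ P) (hν : MenOptimalStable ν P) :
    μ = ν :=
  Matching.ext_menMatch fun m => (P.menPref m).le_antisymm _ _ (hν.2 μ hμ.1 m) (hμ.2 ν hν.1 m)

theorem mpda_eq_of_menOptimalStable (hμ : MenOptimalStable μ P) : mpda P = μ := by
  have hex : ∃ μ, MenOptimalStable μ P := ⟨μ, hμ⟩
  unfold mpda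
  rw [dif_pos hex]
  exact hex.choose_spec.unique hμ

end Stability

namespace DeferredAcceptance

/- A state of the algorithm is the set of pairs `(m, w)` such that `m` has proposed to `w`;
what each woman holds is read off from it. -/

variable (P : Profile M W)

/-- `none` counts as received, so a woman never holds a man she prefers less than being single. -/
def proposersTo (S : Set (M × W)) (w : W) : Set (Option M) :=
  {x | ∀ m, x = some m → (m, w) ∈ S}

def remaining (S : Set (M × W)) (m : M) : Set (Option W) :=
  {x | ∀ w, x = some w → (m, w) ∉ S}

theorem none_mem_proposersTo (S : Set (M × W)) (w : W) : none ∈ proposersTo S w :=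
  fun _ h => nomatch h

theorem none_mem_remaining (S : Set (M × W)) (m : M) : none ∈ remaining S m :=
  fun _ h => nomatch h

variable [Finite M]

section Holder

variable {S S' : Set (M × W)} {m m' : M} {w w' : W}

noncomputable def holder (S : Set (M × W)) (w : W) : Option M :=
  ((P.womenPref w).exists_greatest _ ⟨_, none_mem_proposersTo S w⟩).choose

theorem holder_mem : holder P S w ∈ proposersTo S w :=
  ((P.womenPref w).exists_greatest _ ⟨_, none_mem_proposersTo S w⟩).choose_spec.1

theorem le_holder {x : Option M} (hx : x ∈ proposersTo S w) : (P.womenPref w).le x (holder P S w) :=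
  ((P.womenPref w).exists_greatest _ ⟨_, none_mem_proposersTo S w⟩).choose_spec.2 x hx

theorem mem_of_holder_eq_some (h : holder P S w = some m) : (m, w) ∈ S :=
  holder_mem P m h

theorem some_le_holder (h : (m, w) ∈ S) : (P.womenPref w).le (some m) (holder P S w) :=
  le_holder P fun _ hm => Option.some_injective _ hm ▸ h

theorem holder_le_holder (hS : S ⊆ S') : (P.womenPref w).le (holder P S w) (holder P S' w) :=
  le_holder P fun m hm => hS (holder_mem P m hm)

theorem holder_eq_of_subset (hS : S ⊆ S') (h : holder P S' w ∈ proposersTo S w) :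
    holder P S w = holder P S' w :=
  (P.womenPref w).le_antisymm _ _ (holder_le_holder P hS) (le_holder P h)

theorem holder_eq_some_of_subset (hS : S ⊆ S') (h : holder P S' w = some m) (hm : (m, w) ∈ S) :
    holder P S w = some m :=
  h ▸ holder_eq_of_subset P hS (by rw [h]; exact fun _ he => Option.some_injective _ he ▸ hm)

theorem holder_insert_eq_some (h : holder P (insert (m, w) S) w' = some m') :
    (m' = m ∧ w' = w) ∨ holder P S w' = some m' := by
  by_cases hmem : (m', w') ∈ S
  · exact Or.inr (holder_eq_some_of_subset P (Set.subset_insert _ _) h hmem)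
  · have := mem_of_holder_eq_some P h
    simp only [Set.mem_insert_iff, Prod.mk.injEq] at this
    exact Or.inl (this.resolve_right hmem)

def IsFree (S : Set (M × W)) (m : M) : Prop := ∀ w, holder P S w ≠ some m

/-- As `none ∈ remaining S m`, a man only proposes to women he prefers to staying single. -/
def CanPropose (S : Set (M × W)) (m : M) (w : W) : Prop :=
  IsFree P S m ∧ (m, w) ∉ S ∧ ∀ x ∈ remaining S m, (P.menPref m).le x (some w)

def Terminal (S : Set (M × W)) : Prop := ¬ ∃ m w, CanPropose P S m w

structure Invariant (S : Set (M × W)) : Prop where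
  held_unique : ∀ m w w', holder P S w = some m → holder P S w' = some m → w = w'
  le_of_mem : ∀ m w, (m, w) ∈ S → ∀ x ∈ remaining S m, (P.menPref m).le x (some w)
  /-- Gale and Shapley: no man is rejected by a stable partner, whence men-optimality. -/
  holds_stable_partner : ∀ ν, Stable ν P → ∀ m w, ν.menMatch m = some w → (m, w) ∈ S →
    holder P S w = some m

theorem lt_of_forall_remaining_le {x : Option W}
    (hdom : ∀ y ∈ remaining S m, (P.menPref m).le y (some w))
    (hheld : ∀ w', holder P S w' = some m → w' = w)
    (hx : ∀ w', x = some w' → (m, w') ∈ S → holder P S w' = some m) (hne : x ≠ some w) :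
    (P.menPref m).lt x (some w) :=
  (P.menPref m).lt_of_le_of_ne (hdom x fun w' hw' hmem => hne (hheld w' (hx w' hw' hmem) ▸ hw'))
    hne

theorem invariant_empty : Invariant P ∅ where
  held_unique _ _ _ h := (mem_of_holder_eq_some P h).elim
  le_of_mem _ _ h := h.elim
  holds_stable_partner _ _ _ _ _ h := h.elim

namespace Invariant

variable {P}

theorem insert_held_unique (hI : Invariant P S) (hp : CanPropose P S m w) :
    ∀ m' w₁ w₂, holder P (insert (m, w) S) w₁ = some m' →
      holder P (insert (m, w) S) w₂ = some m' → w₁ = w₂ := by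
  intro m' w₁ w₂ h₁ h₂
  rcases holder_insert_eq_some P h₁ with ⟨hm₁, hw₁⟩ | h₁ <;>
    rcases holder_insert_eq_some P h₂ with ⟨hm₂, hw₂⟩ | h₂
  · exact hw₁.trans hw₂.symm
  · exact (hp.1 w₂ (hm₁ ▸ h₂)).elim
  · exact (hp.1 w₁ (hm₂ ▸ h₁)).elim
  · exact hI.held_unique _ _ _ h₁ h₂

theorem insert_le_of_mem (hI : Invariant P S) (hp : CanPropose P S m w) :
    ∀ m' w', (m', w') ∈ insert (m, w) S →
      ∀ x ∈ remaining (insert (m, w) S) m', (P.menPref m').le x (some w') := by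
  intro m' w' hmem x hx
  have hx' : x ∈ remaining S m' := fun w'' he h => hx w'' he (Set.mem_insert_of_mem _ h)
  rcases hmem with he | hmem
  · obtain ⟨rfl, rfl⟩ := Prod.mk.inj he
    exact hp.2.2 x hx'
  · exact hI.le_of_mem _ _ hmem x hx'

theorem insert_holds_stable_partner (hI : Invariant P S) (hp : CanPropose P S m w) :
    ∀ ν, Stable ν P → ∀ m₁ w₁, ν.menMatch m₁ = some w₁ → (m₁, w₁) ∈ insert (m, w) S →
      holder P (insert (m, w) S) w₁ = some m₁ := by
  intro ν hν m₁ w₁ hν₁ hmem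
  by_contra hne
  have hνw : ν.womenMatch w₁ = some m₁ := (ν.consistent m₁ w₁).1 hν₁
  have hlt : (P.womenPref w₁).lt (some m₁) (holder P (insert (m, w) S) w₁) :=
    (P.womenPref w₁).lt_of_le_of_ne (some_le_holder P hmem) (Ne.symm hne)
  obtain ⟨m₂, hm₂⟩ : ∃ m₂, holder P (insert (m, w) S) w₁ = some m₂ := by
    refine Option.ne_none_iff_exists'.1 fun h => ?_
    rw [h] at hlt
    exact (P.womenPref w₁).lt_irrefl _ ((P.womenPref w₁).lt_of_lt_of_le hlt (hνw ▸ hν.1.2 w₁))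
  have hdom : (∀ y ∈ remaining S m₂, (P.menPref m₂).le y (some w₁)) ∧
      ∀ w', holder P S w' = some m₂ → w' = w₁ := by
    rcases holder_insert_eq_some P hm₂ with ⟨rfl, rfl⟩ | hold
    · exact ⟨hp.2.2, fun w' h => (hp.1 w' h).elim⟩
    · exact ⟨hI.le_of_mem _ _ (mem_of_holder_eq_some P hold),
        fun w' h => hI.held_unique _ _ _ h hold⟩
  refine hν.2 m₂ w₁ ⟨lt_of_forall_remaining_le P hdom.1 hdom.2
    (hI.holds_stable_partner ν hν m₂) fun h => hne ?_, ?_⟩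
  · exact hm₂.trans (congrArg some (ν.eq_of_menMatch_eq_some h hν₁))
  · rw [hνw, ← hm₂]
    exact hlt

theorem step (hI : Invariant P S) (hp : CanPropose P S m w) : Invariant P (insert (m, w) S) :=
  ⟨hI.insert_held_unique hp, hI.insert_le_of_mem hp, hI.insert_holds_stable_partner hp⟩

end Invariant

end Holder

section Run

variable {S : Set (M × W)} {m : M} {w : W}

open Classical in
noncomputable def next (S : Set (M × W)) : Set (M × W) :=
  if h : ∃ p : M × W, CanPropose P S p.1 p.2 then insert h.choose S else S

noncomputable def run : ℕ → Set (M × W)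
  | 0 => ∅
  | n + 1 => next P (run n)

theorem next_eq_insert (h : ¬ Terminal P S) :
    ∃ m w, CanPropose P S m w ∧ next P S = insert (m, w) S := by
  have h' : ∃ p : M × W, CanPropose P S p.1 p.2 := by
    obtain ⟨m, w, hp⟩ := not_not.1 h
    exact ⟨(m, w), hp⟩
  unfold next
  rw [dif_pos h']
  exact ⟨_, _, h'.choose_spec, rfl⟩

theorem next_eq_self_or (S : Set (M × W)) :
    next P S = S ∨ ∃ m w, CanPropose P S m w ∧ next P S = insert (m, w) S := by
  by_cases h : Terminal P S
  · refine Or.inl ?_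
    unfold next
    rw [dif_neg fun ⟨_, hp⟩ => h ⟨_, _, hp⟩]
  · exact Or.inr (next_eq_insert P h)

theorem run_mono : Monotone (run P) :=
  monotone_nat_of_le_succ fun n => by
    show run P n ⊆ next P (run P n)
    rcases next_eq_self_or P (run P n) with he | ⟨m, w, -, he⟩
    · rw [he]
    · rw [he]
      exact Set.subset_insert _ _

theorem invariant_run (n : ℕ) : Invariant P (run P n) := by
  induction n with
  | zero => exact invariant_empty P
  | succ n ih =>
    rcases next_eq_self_or P (run P n) with he | ⟨m, w, hp, he⟩
    · exact (show run P (n + 1) = run P n from he) ▸ ih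
    · exact (show run P (n + 1) = _ from he) ▸ ih.step hp

theorem exists_last_proposal {A : Set M} {N : ℕ} (hA : ∃ m ∈ A, ∃ w, (m, w) ∈ run P N) :
    ∃ n m₀ w₀, m₀ ∈ A ∧ CanPropose P (run P n) m₀ w₀ ∧
      run P (n + 1) = insert (m₀, w₀) (run P n) ∧ run P (n + 1) ⊆ run P N ∧
      ∀ m ∈ A, ∀ w, (m, w) ∈ run P N → (m, w) ∈ run P (n + 1) := by
  classical
  -- `n + 1` is the first time at which every man of `A` has made all his proposals
  have hex : ∃ k, ∀ m ∈ A, ∀ w, (m, w) ∈ run P N → (m, w) ∈ run P k := ⟨N, fun _ _ _ h => h⟩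
  obtain ⟨n, hn⟩ : ∃ n, Nat.find hex = n + 1 := Nat.exists_eq_succ_of_ne_zero fun h0 => by
    obtain ⟨m, hm, w, hw⟩ := hA
    exact (h0 ▸ Nat.find_spec hex) m hm w hw
  have hsettled := Nat.find_spec hex
  rw [hn] at hsettled
  obtain ⟨m₀, hm₀, w₀, hN, hn₀⟩ : ∃ m₀ ∈ A, ∃ w₀, (m₀, w₀) ∈ run P N ∧ (m₀, w₀) ∉ run P n := by
    simpa using Nat.find_min hex (show n < Nat.find hex by omega)
  have hmem : (m₀, w₀) ∈ next P (run P n) := hsettled m₀ hm₀ w₀ hN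
  rcases next_eq_self_or P (run P n) with he | ⟨m, w, hp, he⟩
  · exact absurd (he ▸ hmem) hn₀
  · rw [he] at hmem
    obtain ⟨rfl, rfl⟩ := Prod.mk.inj (hmem.resolve_right hn₀)
    exact ⟨n, m₀, w₀, hm₀, hp, he, run_mono P (hn ▸ Nat.find_min' hex fun _ _ _ h => h),
      hsettled⟩

variable [Finite W]

theorem exists_terminal : ∃ N, Terminal P (run P N) := by
  by_contra! h
  have hgrow : ∀ n, n ≤ (run P n).ncard := by
    intro n
    induction n with
    | zero => exact Nat.zero_le _
    | succ n ih =>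
      obtain ⟨m, w, hp, he⟩ := next_eq_insert P (h n)
      rw [run, he, Set.ncard_insert_of_notMem hp.2.1]
      omega
  have := (hgrow (Nat.card (M × W) + 1)).trans (Set.ncard_le_card _)
  omega

end Run

section Outcome

variable {P} {S : Set (M × W)} {m : M} {w : W} {x : Option W}

open Classical in
noncomputable def Invariant.toMatching (hI : Invariant P S) : Matching M W where
  menMatch m := if h : ∃ w, holder P S w = some m then some h.choose else none
  womenMatch := holder P S
  consistent m w := by
    constructor
    · intro h
      split_ifs at h with hex
      exact Option.some_injective _ h ▸ hex.choose_spec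
    · intro h
      have hex : ∃ w, holder P S w = some m := ⟨w, h⟩
      rw [dif_pos hex, hI.held_unique _ _ _ hex.choose_spec h]

theorem Invariant.toMatching_menMatch_eq_some (hI : Invariant P S) :
    hI.toMatching.menMatch m = some w ↔ holder P S w = some m :=
  hI.toMatching.consistent m w

theorem Invariant.toMatching_menMatch_eq_none (hI : Invariant P S) :
    hI.toMatching.menMatch m = none ↔ IsFree P S m := by
  rw [← not_iff_not, ← ne_eq, Option.ne_none_iff_exists']
  simp only [IsFree, hI.toMatching_menMatch_eq_some, not_forall, not_not]

variable [Finite W]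

theorem Terminal.le_none (hT : Terminal P S) (hm : IsFree P S m) (hx : x ∈ remaining S m) :
    (P.menPref m).le x none := by
  obtain ⟨g, hg, hmax⟩ := (P.menPref m).exists_greatest _ ⟨_, none_mem_remaining S m⟩
  cases g with
  | none => exact hmax x hx
  | some w => exact (hT ⟨m, w, hm, hg w rfl, hmax⟩).elim

theorem Invariant.le_toMatching (hI : Invariant P S) (hT : Terminal P S) (hx : x ∈ remaining S m) :
    (P.menPref m).le x (hI.toMatching.menMatch m) := by
  rcases hμ : hI.toMatching.menMatch m with _ | w
  · exact hT.le_none (hI.toMatching_menMatch_eq_none.1 hμ) hx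
  · exact hI.le_of_mem _ _ (mem_of_holder_eq_some P (hI.toMatching_menMatch_eq_some.1 hμ)) x hx

theorem Invariant.menOptimalStable (hI : Invariant P S) (hT : Terminal P S) :
    MenOptimalStable hI.toMatching P := by
  refine ⟨⟨⟨fun m => hI.le_toMatching hT (none_mem_remaining S m),
    fun w => le_holder P (none_mem_proposersTo S w)⟩, fun m w ⟨hm, hw⟩ => ?_⟩, fun ν hν m => ?_⟩
  · by_cases hmw : (m, w) ∈ S
    · exact (P.womenPref w).lt_irrefl _ ((P.womenPref w).lt_of_lt_of_le hw (some_le_holder P hmw))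
    · refine (P.menPref m).lt_irrefl _ ((P.menPref m).lt_of_lt_of_le hm (hI.le_toMatching hT ?_))
      exact fun w' hw' => Option.some_injective _ hw' ▸ hmw
  · by_cases hx : ν.menMatch m ∈ remaining S m
    · exact hI.le_toMatching hT hx
    · obtain ⟨w, hw, hmw⟩ : ∃ w, ν.menMatch m = some w ∧ (m, w) ∈ S := by
        simpa [remaining] using hx
      rw [hw, (hI.toMatching_menMatch_eq_some).2 (hI.holds_stable_partner ν hν m w hw hmw)]
      exact (P.menPref m).le_refl _

end Outcome

section LastProposal

variable {P} {S F : Set (M × W)} {m m₀ m' : M} {w w' : W}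

theorem CanPropose.eq_of_holder_eq_some (hp : CanPropose P S m w) (hSF : S ⊆ F)
    (hF : holder P F w' = some m) (hmem : (m, w') ∈ insert (m, w) S) : w' = w :=
  hmem.elim (fun h => (Prod.mk.inj h).2) fun hmem =>
    (hp.1 w' (holder_eq_some_of_subset P hSF hF hmem)).elim

theorem Invariant.not_mem_of_rejected (hI : Invariant P S) (hSF : S ⊆ F)
    (hheld : holder P S w = some m) (hrej : holder P F w ≠ some m) (hF : holder P F w' = some m) :
    (m, w') ∉ S := fun hmem =>
  hrej (hI.held_unique _ _ _ hheld (holder_eq_some_of_subset P hSF hF hmem) ▸ hF)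

theorem Invariant.lt_of_rejected (hI : Invariant P S) (hIF : Invariant P F) (hSF : S ⊆ F)
    (hheld : holder P S w = some m) (hrej : holder P F w ≠ some m) :
    (P.menPref m).lt (hIF.toMatching.menMatch m) (some w) :=
  lt_of_forall_remaining_le P (hI.le_of_mem _ _ (mem_of_holder_eq_some P hheld))
    (fun _ h => hI.held_unique _ _ _ h hheld)
    (fun _ hx hmem =>
      (hI.not_mem_of_rejected hSF hheld hrej (hIF.toMatching_menMatch_eq_some.1 hx) hmem).elim)
    (fun h => hrej (hIF.toMatching_menMatch_eq_some.1 h))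

/-- When `m₀` proposes to `w`, she holds a man `m₁` at least as good as her `ν`-partner `m'`, who
has proposed to her; if `m₀` ends up with `w` and the other men preferring `ν` have proposed to
their final partners, then `m₁` does not prefer `ν` and blocks it with `w`. -/
theorem Invariant.exists_blocks_of_canPropose (hI : Invariant P S) (hIF : Invariant P F)
    (hSF : S ⊆ F) (hp : CanPropose P S m₀ w) (hF₀ : holder P F w = some m₀) {ν : Matching M W}
    (hIR : IndividuallyRational ν P) (hm' : m' ∈ improvingMen P hIF.toMatching ν)
    (hν' : ν.menMatch m' = some w) (hm'S : (m', w) ∈ S)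
    (hrow : ∀ m ∈ improvingMen P hIF.toMatching ν, m ≠ m₀ →
      ∃ w', hIF.toMatching.menMatch m = some w' ∧ (m, w') ∈ S) :
    ∃ m₁ ∉ improvingMen P hIF.toMatching ν, Blocks m₁ w ν P := by
  have hle : (P.womenPref w).le (some m') (holder P S w) := some_le_holder P hm'S
  obtain ⟨m₁, hm₁⟩ : ∃ m₁, holder P S w = some m₁ := by
    refine Option.ne_none_iff_exists'.1 fun h => ?_
    have hIRw := hIR.2 w
    rw [(ν.consistent m' w).1 hν'] at hIRw
    exact Option.some_ne_none m' ((P.womenPref w).le_antisymm _ _ (h ▸ hle) hIRw)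
  have hm₁m₀ : m₁ ≠ m₀ := fun h => hp.1 w (hm₁.trans (congrArg some h))
  have hrej : holder P F w ≠ some m₁ := fun h =>
    hm₁m₀ (Option.some_injective _ (h.symm.trans hF₀))
  have hm₁A : m₁ ∉ improvingMen P hIF.toMatching ν := fun hm₁A => by
    obtain ⟨w₂, hμ₁, hmem⟩ := hrow m₁ hm₁A hm₁m₀
    exact hI.not_mem_of_rejected hSF hm₁ hrej (hIF.toMatching_menMatch_eq_some.1 hμ₁) hmem
  refine ⟨m₁, hm₁A, ?_, ?_⟩
  · exact (P.menPref m₁).lt_of_le_of_lt ((P.menPref m₁).not_lt.1 hm₁A)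
      (hI.lt_of_rejected hIF hSF hm₁ hrej)
  · rw [(ν.consistent m' w).1 hν', ← hm₁]
    exact (P.womenPref w).lt_of_le_of_ne hle fun h =>
      hm₁A (Option.some_injective _ (h.trans hm₁) ▸ hm')

variable [Finite W] {N : ℕ}

theorem Invariant.exists_mem_of_lt (hI : Invariant P S) (hT : Terminal P S) {x : Option W}
    (h : (P.menPref m).lt (hI.toMatching.menMatch m) x) : ∃ w, x = some w ∧ (m, w) ∈ S := by
  by_contra! hx
  exact (P.menPref m).lt_irrefl _ ((P.menPref m).lt_of_lt_of_le h (hI.le_toMatching hT hx))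

theorem exists_blocks_of_image_eq (hT : Terminal P (run P N)) {μ ν : Matching M W}
    (hμ : μ = (invariant_run P N).toMatching) (hIR : IndividuallyRational ν P)
    (hne : (improvingMen P μ ν).Nonempty)
    (himage : ν.menMatch '' improvingMen P μ ν = μ.menMatch '' improvingMen P μ ν) :
    ∃ m₁ ∉ improvingMen P μ ν, ∃ m' ∈ improvingMen P μ ν, ∃ w,
      ν.menMatch m' = some w ∧ Blocks m₁ w ν P := by
  subst hμ
  set hF := invariant_run P N
  set A := improvingMen P hF.toMatching ν
  have hprop : ∀ m ∈ A, ∃ w, ν.menMatch m = some w ∧ (m, w) ∈ run P N :=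
    fun m hm => hF.exists_mem_of_lt hT hm
  have hμA : ∀ m ∈ A, ∃ m' ∈ A, ∃ w,
      hF.toMatching.menMatch m = some w ∧ ν.menMatch m' = some w := by
    intro m hm
    obtain ⟨m', hm', he⟩ := himage ▸ Set.mem_image_of_mem hF.toMatching.menMatch hm
    obtain ⟨w, hw, -⟩ := hprop m' hm'
    exact ⟨m', hm', w, he ▸ hw, hw⟩
  obtain ⟨m, hm⟩ := hne
  obtain ⟨w, -, hw⟩ := hprop m hm
  obtain ⟨n, m₀, w₀, hm₀, hp, hstep, hsub, hlast⟩ := exists_last_proposal P ⟨m, hm, w, hw⟩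
  have hS : run P n ⊆ run P N := (Set.subset_insert _ _).trans (hstep ▸ hsub)
  have hrow : ∀ m ∈ A, m ≠ m₀ → ∀ w, (m, w) ∈ run P N → (m, w) ∈ run P n := fun m hm hne w hw =>
    ((hstep ▸ hlast m hm w hw : (m, w) ∈ insert (m₀, w₀) (run P n))).resolve_left
      fun h => hne (Prod.mk.inj h).1
  -- the last proposal of a man of `A` goes to his final partner, some `ν`-partner of `A`
  obtain ⟨m', hm', w, hμ₀, hν'⟩ := hμA m₀ hm₀
  have hF₀ : holder P (run P N) w = some m₀ := hF.toMatching_menMatch_eq_some.1 hμ₀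
  obtain rfl : w = w₀ :=
    hp.eq_of_holder_eq_some hS hF₀ (hstep ▸ hlast m₀ hm₀ w (mem_of_holder_eq_some P hF₀))
  have hm'm₀ : m' ≠ m₀ := by
    rintro rfl
    have h : (P.menPref m').lt _ _ := hm'
    rw [hμ₀, hν'] at h
    exact (P.menPref m').lt_irrefl _ h
  obtain ⟨w', hw', hm'w⟩ := hprop m' hm'
  obtain rfl : w' = w := Option.some_injective _ (hw'.symm.trans hν')
  have hrow' : ∀ m ∈ A, m ≠ m₀ → ∃ w₂, hF.toMatching.menMatch m = some w₂ ∧ (m, w₂) ∈ run P n := by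
    intro m hm hne
    obtain ⟨-, -, w₂, hμ₂, -⟩ := hμA m hm
    exact ⟨w₂, hμ₂, hrow m hm hne w₂
      (mem_of_holder_eq_some P (hF.toMatching_menMatch_eq_some.1 hμ₂))⟩
  obtain ⟨m₁, hm₁, hblocks⟩ := (invariant_run P n).exists_blocks_of_canPropose hF hS hp hF₀ hIR
    hm' hν' (hrow m' hm' hm'm₀ w' hm'w) hrow'
  exact ⟨m₁, hm₁, m', hm', w', hν', hblocks⟩

end LastProposal

end DeferredAcceptance

theorem exists_menOptimalStable [Finite M] [Finite W] (P : Profile M W) :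
    ∃ μ, MenOptimalStable μ P :=
  let ⟨N, hT⟩ := DeferredAcceptance.exists_terminal P
  ⟨_, (DeferredAcceptance.invariant_run P N).menOptimalStable hT⟩

theorem mpda_menOptimalStable [Finite M] [Finite W] (P : Profile M W) :
    MenOptimalStable (mpda P) P := by
  obtain ⟨μ, hμ⟩ := exists_menOptimalStable P
  rwa [mpda_eq_of_menOptimalStable hμ]

/-- The blocking lemma of Gale and Sotomayor. -/
theorem MenOptimalStable.exists_blocks [Finite M] [Finite W] {P : Profile M W}
    {μ ν : Matching M W} (hμ : MenOptimalStable μ P) (hIR : IndividuallyRational ν P)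
    (hne : (improvingMen P μ ν).Nonempty) :
    ∃ m₁ ∉ improvingMen P μ ν, ∃ m' ∈ improvingMen P μ ν, ∃ w,
      ν.menMatch m' = some w ∧ Blocks m₁ w ν P := by
  set A := improvingMen P μ ν
  by_cases hstatic : ∃ m ∈ A, ∃ w m₁, ν.menMatch m = some w ∧ μ.womenMatch w = some m₁ ∧ m₁ ∉ A
  · obtain ⟨m, hm, w, m₁, hν, hμw, hm₁⟩ := hstatic
    exact ⟨m₁, hm₁, m, hm, w, hν, hμ.1.blocks_of_mem_improvingMen hm hν hμw hm₁⟩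
  push Not at hstatic
  have hsub : ν.menMatch '' A ⊆ μ.menMatch '' A := by
    rintro _ ⟨m, hm, rfl⟩
    obtain ⟨w, hw⟩ := Option.ne_none_iff_exists'.1 (hμ.1.1.ne_none_of_mem_improvingMen hm)
    have hlt := hμ.1.lt_womenMatch (hw ▸ hm : (P.menPref m).lt _ (some w))
    obtain ⟨m₁, hm₁⟩ := Option.ne_none_iff_exists'.1 fun h => by
      have hIRw := hIR.2 w
      rw [(ν.consistent m w).1 hw] at hIRw
      exact (P.womenPref w).lt_irrefl _ ((P.womenPref w).lt_of_le_of_lt hIRw (h ▸ hlt))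
    exact ⟨m₁, hstatic m hm w m₁ hw hm₁, hw ▸ (μ.consistent m₁ w).2 hm₁⟩
  obtain ⟨N, hT⟩ := DeferredAcceptance.exists_terminal P
  exact DeferredAcceptance.exists_blocks_of_image_eq hT
    (hμ.unique ((DeferredAcceptance.invariant_run P N).menOptimalStable hT)) hIR hne
    (Matching.image_menMatch_eq_of_subset (fun _ hm => hμ.1.1.ne_none_of_mem_improvingMen hm) hsub)

section Manipulation

variable {P Q : Profile M W} {Sm : Set M} {Sw : Set W} {w : W}

theorem MpdaManipulates.individuallyRational (h : MpdaManipulates P Q Sm Sw)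
    (hP : IndividuallyRational (mpda P) P) (hQ : IndividuallyRational (mpda Q) Q) :
    IndividuallyRational (mpda Q) P := by
  obtain ⟨hQm, hQw, hSm, hSw⟩ := h
  refine ⟨fun m => ?_, fun w => ?_⟩
  · by_cases hm : m ∈ Sm
    · exact (P.menPref m).le_of_lt ((P.menPref m).lt_of_le_of_lt (hP.1 m) (hSm m hm))
    · exact hQm m hm ▸ hQ.1 m
  · by_cases hw : w ∈ Sw
    · exact (P.womenPref w).le_of_lt ((P.womenPref w).lt_of_le_of_lt (hP.2 w) (hSw w hw))
    · exact hQw w hw ▸ hQ.2 w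

theorem MpdaManipulates.womenPref_eq (h : MpdaManipulates P Q Sm Sw)
    (hw : (P.womenPref w).lt ((mpda Q).womenMatch w) ((mpda P).womenMatch w)) :
    Q.womenPref w = P.womenPref w :=
  h.2.1 w fun hw' => (P.womenPref w).lt_asymm hw (h.2.2.2 w hw')

end Manipulation

/-- under any manipulation of MPDA, every woman weakly prefers her
match at the manipulated profile to her match at the true profile. -/
theorem women_weakly_better_off [Fintype M] [Fintype W]
    (P Q : Profile M W) (Sm : Set M) (Sw : Set W)
    (h : MpdaManipulates P Q Sm Sw) (w : W) :
    (P.womenPref w).le ((mpda P).womenMatch w) ((mpda Q).womenMatch w) := by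
  have hμ := mpda_menOptimalStable P
  have hν := mpda_menOptimalStable Q
  have hIR := h.individuallyRational hμ.1.1 hν.1.1
  by_contra hlt
  rw [LinearOrder.not_le] at hlt
  obtain ⟨m, hm⟩ := Option.ne_none_iff_exists'.1 fun h0 => (P.womenPref w).lt_irrefl _
    ((P.womenPref w).lt_of_le_of_lt (hIR.2 w) (h0 ▸ hlt))
  have hmA : m ∈ improvingMen P (mpda P) (mpda Q) := by
    by_cases hmS : m ∈ Sm
    · exact h.2.2.1 m hmS
    have hQlt := hν.1.lt_menMatch (m := m) (w := w) (by rw [h.womenPref_eq hlt, ← hm]; exact hlt)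
    rw [h.1 m hmS] at hQlt
    show (P.menPref m).lt _ _
    rwa [((mpda P).consistent m w).2 hm]
  obtain ⟨m₁, hm₁, m₂, hm₂, w₁, hν₂, hblocks⟩ := hμ.exists_blocks hIR ⟨m, hmA⟩
  have hw₁ : (P.womenPref w₁).lt ((mpda Q).womenMatch w₁) ((mpda P).womenMatch w₁) := by
    rw [((mpda Q).consistent m₂ w₁).1 hν₂]
    exact hμ.1.lt_womenMatch (hν₂ ▸ hm₂)
  have hm₁S : m₁ ∉ Sm := fun hm₁S => hm₁ (h.2.2.1 m₁ hm₁S)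
  exact hν.1.2 m₁ w₁ (by rwa [Blocks, h.1 m₁ hm₁S, h.womenPref_eq hw₁])
end

section
/- Suppose the MPDA rule D^M is manipulable at profile P by a coalition A' via misreports P̃_{A'}. Then the set of unmatched agents is unchanged: for every agent a, D^M_a(P) = ∅ if and only if D^M_a(P̃_{A'}, P_{-A'}) = ∅. In particular, an agent unmatched at the true profile cannot be part of a successful manipulating coalition. -/
variable {M W : Type*}

set_option linter.unusedSectionVars false

section Helpers
variable {α : Type*} (L : LinearOrder α) {x y z : α}

lemma lle_of_lt (h : L.lt x y) : L.le x y := by letI := L; exact le_of_lt h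
lemma lnot_lt (h : ¬ L.lt x y) : L.le y x := by letI := L; exact not_lt.mp h
lemma llt_irrefl (h : L.lt x x) : False := by letI := L; exact lt_irrefl x h
lemma llt_asymm (h : L.lt x y) (h' : L.lt y x) : False := by letI := L; exact lt_asymm h h'
lemma llt_of_le_of_lt (h : L.le x y) (h' : L.lt y z) : L.lt x z := by letI := L; exact lt_of_le_of_lt h h'
lemma llt_of_lt_of_le (h : L.lt x y) (h' : L.le y z) : L.lt x z := by letI := L; exact lt_of_lt_of_le h h'
lemma llt_of_le_of_ne (h : L.le x y) (h' : x ≠ y) : L.lt x y := by letI := L; exact lt_of_le_of_ne h h'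
lemma lle_antisymm (h : L.le x y) (h' : L.le y x) : x = y := by letI := L; exact le_antisymm h h'
lemma lnot_lt_of_le (h : L.le x y) (h' : L.lt y x) : False := by letI := L; exact absurd h' (not_lt.mpr h)

lemma lmax_mem (s : Finset α) (h : s.Nonempty) : @Finset.max' _ L s h ∈ s := by
  letI := L; exact s.max'_mem h
lemma le_lmax (s : Finset α) (h : s.Nonempty) {a : α} (ha : a ∈ s) :
    L.le a (@Finset.max' _ L s h) := by letI := L; exact s.le_max' a ha
end Helpers

lemma surj_of_inj_inj {α β : Type*} [Finite α] [Finite β] {f : α → β} {g : β → α}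
    (hf : Function.Injective f) (hg : Function.Injective g) : Function.Surjective g := by
  haveI := Fintype.ofFinite α; haveI := Fintype.ofFinite β
  have h1 : Fintype.card α ≤ Fintype.card β := Fintype.card_le_of_injective f hf
  have h2 : Fintype.card β ≤ Fintype.card α := Fintype.card_le_of_injective g hg
  have e : α ≃ β := Fintype.equivOfCardEq (le_antisymm h1 h2)
  have hs : Function.Surjective (g ∘ e) := Finite.surjective_of_injective (hg.comp e.injective)
  intro a; obtain ⟨b, hb⟩ := hs a; exact ⟨e b, hb⟩

section GS
attribute [local instance] Classical.propDecidable
variable [Fintype M] [Fintype W] (P : Profile M W)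

/-- candidate set for man `m`'s proposal: outside option plus remaining women -/
noncomputable def cands (R : M → Finset W) (m : M) : Finset (Option W) :=
  insert none ((R m).image some)

lemma cands_ne (R : M → Finset W) (m : M) : (cands R m).Nonempty :=
  ⟨none, Finset.mem_insert_self _ _⟩

/-- `m`'s proposal: his favorite among remaining women and the outside option -/
noncomputable def propose (R : M → Finset W) (m : M) : Option W :=
  @Finset.max' _ (P.menPref m) (cands R m) (cands_ne R m)

noncomputable def props (R : M → Finset W) (w : W) : Finset M :=
  Finset.univ.filter (fun m => propose P R m = some w)

noncomputable def wcands (R : M → Finset W) (w : W) : Finset (Option M) :=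
  insert none ((props P R w).image some)

lemma wcands_ne (R : M → Finset W) (w : W) : (wcands P R w).Nonempty :=
  ⟨none, Finset.mem_insert_self _ _⟩

/-- `w`'s favorite among current proposers and the outside option -/
noncomputable def best (R : M → Finset W) (w : W) : Option M :=
  @Finset.max' _ (P.womenPref w) (wcands P R w) (wcands_ne P R w)

def rejected (R : M → Finset W) (m : M) (w : W) : Prop :=
  propose P R m = some w ∧ best P R w ≠ some m

noncomputable def step (R : M → Finset W) : M → Finset W :=
  fun m => (R m).filter (fun w => ¬ rejected P R m w)

lemma mem_cands {R : M → Finset W} {m : M} {w : W} :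
    some w ∈ cands R m ↔ w ∈ R m := by
  simp [cands]

lemma none_mem_cands (R : M → Finset W) (m : M) : (none : Option W) ∈ cands R m :=
  Finset.mem_insert_self _ _

lemma le_propose {R : M → Finset W} {m : M} {w : W} (h : w ∈ R m) :
    (P.menPref m).le (some w) (propose P R m) :=
  le_lmax _ _ _ (mem_cands.mpr h)

lemma none_le_propose (R : M → Finset W) (m : M) :
    (P.menPref m).le none (propose P R m) :=
  le_lmax _ _ _ (none_mem_cands R m)

lemma mem_props {R : M → Finset W} {m : M} {w : W} :
    m ∈ props P R w ↔ propose P R m = some w := by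
  simp [props]

lemma le_best {R : M → Finset W} {m : M} {w : W} (h : m ∈ props P R w) :
    (P.womenPref w).le (some m) (best P R w) :=
  le_lmax _ _ _ (Finset.mem_insert_of_mem (Finset.mem_image_of_mem some h))

lemma none_le_best (R : M → Finset W) (w : W) :
    (P.womenPref w).le none (best P R w) :=
  le_lmax _ _ _ (Finset.mem_insert_self _ _)

lemma best_cases (R : M → Finset W) (w : W) :
    best P R w = none ∨ ∃ m ∈ props P R w, best P R w = some m := by
  have h := lmax_mem (P.womenPref w) (wcands P R w) (wcands_ne P R w)
  rw [show @Finset.max' _ (P.womenPref w) (wcands P R w) (wcands_ne P R w) = best P R w from rfl] at h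
  rcases Finset.mem_insert.mp h with h | h
  · exact Or.inl h
  · rcases Finset.mem_image.mp h with ⟨m, hm, hme⟩
    exact Or.inr ⟨m, hm, hme.symm⟩

lemma props_of_best {R : M → Finset W} {w : W} {m : M} (h : best P R w = some m) :
    propose P R m = some w := by
  rcases best_cases P R w with h' | ⟨m', hm', he⟩
  · rw [h] at h'; cases h'
  · rw [h] at he; injection he with he'; rw [he']; exact (mem_props P).mp hm'

lemma rejected_mem {R : M → Finset W} {m : M} {w : W} (h : rejected P R m w) : w ∈ R m := by
  have := lmax_mem (P.menPref m) (cands R m) (cands_ne R m)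
  rw [show @Finset.max' _ (P.menPref m) (cands R m) (cands_ne R m) = propose P R m from rfl,
    h.1] at this
  exact mem_cands.mp this

lemma propose_congr {R R' : M → Finset W} {m : M} (h : R m = R' m) :
    propose P R m = propose P R' m := by
  unfold propose cands
  congr 1
  rw [h]

lemma step_subset (R : M → Finset W) (m : M) : step P R m ⊆ R m :=
  Finset.filter_subset _ _

/-- at a fixed point of `step` there are no rejections at all -/
lemma no_rejection_of_fix {R : M → Finset W} (hfix : step P R = R) (m : M) (w : W) :
    ¬ rejected P R m w := by
  intro hr
  have hw : w ∈ R m := rejected_mem P hr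
  have : w ∈ step P R m := by rw [hfix]; exact hw
  exact (Finset.mem_filter.mp this).2 hr

/-- a man held by his proposal target keeps proposing to her after a step -/
lemma propose_step_of_best {R : M → Finset W} {m : M} {w : W}
    (h : best P R w = some m) : propose P (step P R) m = some w := by
  have hp : propose P R m = some w := props_of_best P h
  have hstep : step P R m = R m := by
    apply Finset.filter_true_of_mem
    intro w' _ hr
    have : w' = w := by have := hr.1.symm.trans hp; injection this
    subst this; exact hr.2 h
  exact (propose_congr P hstep).trans hp

lemma best_mono (R : M → Finset W) (w : W) :
    (P.womenPref w).le (best P R w) (best P (step P R) w) := by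
  rcases best_cases P R w with h | ⟨m, _, he⟩
  · rw [h]; exact none_le_best P _ w
  · rw [he]
    exact le_best P ((mem_props P).mpr (propose_step_of_best P he))

/-- Invariant A: no stable partner is ever rejected. -/
def InvA (R : M → Finset W) : Prop :=
  ∀ ν : Matching M W, Stable ν P → ∀ m w, ν.menMatch m = some w → w ∈ R m

/-- Invariant B: a removed woman strictly prefers her current best option to the man. -/
def InvB (R : M → Finset W) : Prop :=
  ∀ m w, w ∉ R m → (P.womenPref w).lt (some m) (best P R w)

lemma invB_step {R : M → Finset W} (hB : InvB P R) : InvB P (step P R) := by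
  intro m w hw
  rcases Classical.em (w ∈ R m) with hmem | hmem
  · -- newly rejected
    have hr : rejected P R m w := by
      by_contra hr
      exact hw (Finset.mem_filter.mpr ⟨hmem, hr⟩)
    have h1 : (P.womenPref w).le (some m) (best P R w) :=
      le_best P ((mem_props P).mpr hr.1)
    exact llt_of_lt_of_le _ (llt_of_le_of_ne _ h1 (fun he => hr.2 he.symm)) (best_mono P R w)
  · exact llt_of_lt_of_le _ (hB m w hmem) (best_mono P R w)

lemma invA_step {R : M → Finset W} (hA : InvA P R) : InvA P (step P R) := by
  intro ν hν m w hm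
  have hwR : w ∈ R m := hA ν hν m w hm
  refine Finset.mem_filter.mpr ⟨hwR, ?_⟩
  intro hr
  have hwm : ν.womenMatch w = some m := (ν.consistent m w).mp hm
  rcases best_cases P R w with hb | ⟨m', hm', hb⟩
  · -- woman prefers being alone to all proposers, incl. m; but m proposes to her
    have h1 : (P.womenPref w).le (some m) none := by
      rw [← hb]; exact le_best P ((mem_props P).mpr hr.1)
    have h2 : (P.womenPref w).le none (some m) := by
      have := hν.1.2 w; rwa [hwm] at this
    exact absurd (lle_antisymm _ h1 h2) (by simp)
  · -- m' = best proposer blocks ν with w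
    have hmm' : m ≠ m' := fun he => hr.2 (by rw [← he] at hb; exact hb)
    apply hν.2 m' w
    constructor
    · -- m' prefers w to his ν-partner
      have hp' : propose P R m' = some w := (mem_props P).mp hm'
      rcases hmv : ν.menMatch m' with _ | w''
      · refine llt_of_le_of_ne _ ?_ (by simp)
        rw [← hp']; exact none_le_propose P R m'
      · have hw'' : w'' ∈ R m' := hA ν hν m' w'' hmv
        have hle : (P.menPref m').le (some w'') (propose P R m') := le_propose P hw''
        rw [hp'] at hle
        refine llt_of_le_of_ne _ hle ?_
        intro he
        have h3 := (ν.consistent m' w).mp (by rw [hmv, he])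
        rw [hwm] at h3
        exact hmm' (by injection h3)
    · -- w prefers m' to m = ν(w)
      rw [hwm]
      have h1 : (P.womenPref w).le (some m) (best P R w) :=
        le_best P ((mem_props P).mpr hr.1)
      rw [hb] at h1
      exact llt_of_le_of_ne _ h1 (fun he => hmm' (by injection he))

lemma measure_lt {R : M → Finset W} (h : step P R ≠ R) :
    (∑ m, (step P R m).card) < ∑ m, (R m).card := by
  have hne : ∃ m, step P R m ≠ R m := by
    by_contra hc
    push_neg at hc
    exact h (funext hc)
  obtain ⟨m₀, hm₀⟩ := hne
  apply Finset.sum_lt_sum (fun m _ => Finset.card_le_card (step_subset P R m))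
  exact ⟨m₀, Finset.mem_univ _, Finset.card_lt_card (Finset.ssubset_iff_subset_ne.mpr
    ⟨step_subset P R m₀, hm₀⟩)⟩

lemma gs_reach : ∀ (n : ℕ) (R : M → Finset W), (∑ m, (R m).card) ≤ n → InvA P R → InvB P R →
    ∃ R', step P R' = R' ∧ InvA P R' ∧ InvB P R' := by
  intro n
  induction n with
  | zero =>
    intro R hm hA hB
    refine ⟨R, ?_, hA, hB⟩
    by_contra hne
    have := measure_lt P hne
    omega
  | succ n ih =>
    intro R hm hA hB
    rcases Classical.em (step P R = R) with hfix | hne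
    · exact ⟨R, hfix, hA, hB⟩
    · exact ih (step P R) (by have := measure_lt P hne; omega) (invA_step P hA) (invB_step P hB)

theorem mosm_exists : ∃ μ : Matching M W, MenOptimalStable μ P := by
  obtain ⟨R, hfix, hA, hB⟩ := gs_reach P (∑ m, ((fun _ => (Finset.univ : Finset W)) m).card)
    (fun _ => Finset.univ) le_rfl
    (fun ν hν m w _ => Finset.mem_univ w) (fun m w hw => absurd (Finset.mem_univ w) hw)
  have hnr : ∀ m w, ¬ rejected P R m w := no_rejection_of_fix P hfix
  have hcons : ∀ m w, propose P R m = some w ↔ best P R w = some m := by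
    intro m w
    constructor
    · intro hp
      by_contra hne
      exact hnr m w ⟨hp, hne⟩
    · exact props_of_best P
  refine ⟨⟨propose P R, best P R, hcons⟩, ⟨⟨fun m => none_le_propose P R m,
      fun w => none_le_best P R w⟩, ?_⟩, ?_⟩
  · -- no blocking pair
    rintro m w ⟨h1, h2⟩
    simp only at h1 h2
    have hw : w ∉ R m := by
      intro hw
      exact lnot_lt_of_le _ (le_propose P hw) h1
    exact llt_asymm _ (hB m w hw) h2
  · -- men-optimality
    intro ν hν m
    simp only
    rcases hmv : ν.menMatch m with _ | w
    · exact none_le_propose P R m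
    · exact le_propose P (hA ν hν m w hmv)

/-- the MPDA rule always outputs the men-optimal stable matching -/
theorem mpda_spec : MenOptimalStable (mpda P) P := by
  have h : ∃ μ : Matching M W, MenOptimalStable μ P := mosm_exists P
  rw [mpda]
  simp only [dif_pos h]
  exact h.choose_spec

end GS

/-- a manipulation of MPDA leaves the set of unmatched agents
unchanged. -/
theorem same_unmatched_agents [Fintype M] [Fintype W]
    (P Q : Profile M W) (Sm : Set M) (Sw : Set W)
    (h : MpdaManipulates P Q Sm Sw) :
    (∀ m : M, (mpda P).menMatch m = none ↔ (mpda Q).menMatch m = none) ∧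
    (∀ w : W, (mpda P).womenMatch w = none ↔ (mpda Q).womenMatch w = none) := by
  obtain ⟨h1, h2, h3, h4⟩ := h
  set μ := mpda P with hμdef
  set ν := mpda Q with hνdef
  have hμ : Stable μ P := (mpda_spec P).1
  have hν : Stable ν Q := (mpda_spec Q).1
  -- Claim A: a man improving (w.r.t. P) is ν-matched, to a woman worsening (w.r.t. P)
  have hA : ∀ m, (P.menPref m).lt (μ.menMatch m) (ν.menMatch m) →
      ∃ w, ν.menMatch m = some w ∧ (P.womenPref w).lt (ν.womenMatch w) (μ.womenMatch w) := by
    intro m him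
    have hlt : (P.menPref m).lt none (ν.menMatch m) := llt_of_le_of_lt _ (hμ.1.1 m) him
    have hne : ν.menMatch m ≠ none := fun he => llt_irrefl _ (he ▸ hlt)
    obtain ⟨w, hw⟩ := Option.ne_none_iff_exists'.mp hne
    refine ⟨w, hw, ?_⟩
    have hwm : ν.womenMatch w = some m := (ν.consistent m w).mp hw
    rw [hwm]
    have hb1 : (P.menPref m).lt (μ.menMatch m) (some w) := by rw [← hw]; exact him
    have hb2 : ¬ (P.womenPref w).lt (μ.womenMatch w) (some m) := fun hb2 => hμ.2 m w ⟨hb1, hb2⟩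
    refine llt_of_le_of_ne _ (lnot_lt _ hb2) ?_
    intro he
    have hc := (μ.consistent m w).mpr he.symm
    rw [hc, hw] at him
    exact llt_irrefl _ him
  -- Claim B: a woman improving (w.r.t. P) is ν-matched, to a man worsening (w.r.t. P)
  have hB : ∀ w, (P.womenPref w).lt (μ.womenMatch w) (ν.womenMatch w) →
      ∃ m, ν.womenMatch w = some m ∧ (P.menPref m).lt (ν.menMatch m) (μ.menMatch m) := by
    intro w him
    have hlt : (P.womenPref w).lt none (ν.womenMatch w) := llt_of_le_of_lt _ (hμ.1.2 w) him
    have hne : ν.womenMatch w ≠ none := fun he => llt_irrefl _ (he ▸ hlt)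
    obtain ⟨m, hm⟩ := Option.ne_none_iff_exists'.mp hne
    refine ⟨m, hm, ?_⟩
    have hmm : ν.menMatch m = some w := (ν.consistent m w).mpr hm
    rw [hmm]
    have hb2 : (P.womenPref w).lt (μ.womenMatch w) (some m) := by rw [← hm]; exact him
    have hb1 : ¬ (P.menPref m).lt (μ.menMatch m) (some w) := fun hb1 => hμ.2 m w ⟨hb1, hb2⟩
    refine llt_of_le_of_ne _ (lnot_lt _ hb1) ?_
    intro he
    have hc := (μ.consistent m w).mp he.symm
    rw [hc, hm] at him
    exact llt_irrefl _ him
  -- Claim C: a woman worsening (w.r.t. P) is μ-matched, to a man improving (w.r.t. P)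
  have hC : ∀ w, (P.womenPref w).lt (ν.womenMatch w) (μ.womenMatch w) →
      ∃ m, μ.womenMatch w = some m ∧ (P.menPref m).lt (μ.menMatch m) (ν.menMatch m) := by
    intro w hwor
    have hwS : w ∉ Sw := fun hw => llt_asymm _ hwor (h4 w hw)
    have hQw : Q.womenPref w = P.womenPref w := h2 w hwS
    have hworQ : (Q.womenPref w).lt (ν.womenMatch w) (μ.womenMatch w) := by rw [hQw]; exact hwor
    have hlt : (Q.womenPref w).lt none (μ.womenMatch w) := llt_of_le_of_lt _ (hν.1.2 w) hworQ
    have hne : μ.womenMatch w ≠ none := fun he => llt_irrefl _ (he ▸ hlt)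
    obtain ⟨m, hm⟩ := Option.ne_none_iff_exists'.mp hne
    refine ⟨m, hm, ?_⟩
    have hmm : μ.menMatch m = some w := (μ.consistent m w).mpr hm
    have hb2 : (Q.womenPref w).lt (ν.womenMatch w) (some m) := by rw [← hm]; exact hworQ
    have hb1 : ¬ (Q.menPref m).lt (ν.menMatch m) (some w) := fun hb1 => hν.2 m w ⟨hb1, hb2⟩
    have hneq : some w ≠ ν.menMatch m := by
      intro he
      have hc := (ν.consistent m w).mp he.symm
      rw [hc, hm] at hwor
      exact llt_irrefl _ hwor
    have hQimp : (Q.menPref m).lt (μ.menMatch m) (ν.menMatch m) := by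
      rw [hmm]; exact llt_of_le_of_ne _ (lnot_lt _ hb1) hneq
    rcases Classical.em (m ∈ Sm) with hmS | hmS
    · exact h3 m hmS
    · rw [← h1 m hmS]; exact hQimp
  -- Claim D: a man worsening (w.r.t. P) is μ-matched, to a woman improving (w.r.t. P)
  have hD : ∀ m, (P.menPref m).lt (ν.menMatch m) (μ.menMatch m) →
      ∃ w, μ.menMatch m = some w ∧ (P.womenPref w).lt (μ.womenMatch w) (ν.womenMatch w) := by
    intro m hwor
    have hmS : m ∉ Sm := fun hm => llt_asymm _ hwor (h3 m hm)
    have hQm : Q.menPref m = P.menPref m := h1 m hmS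
    have hworQ : (Q.menPref m).lt (ν.menMatch m) (μ.menMatch m) := by rw [hQm]; exact hwor
    have hlt : (Q.menPref m).lt none (μ.menMatch m) := llt_of_le_of_lt _ (hν.1.1 m) hworQ
    have hne : μ.menMatch m ≠ none := fun he => llt_irrefl _ (he ▸ hlt)
    obtain ⟨w, hw⟩ := Option.ne_none_iff_exists'.mp hne
    refine ⟨w, hw, ?_⟩
    have hwm : μ.womenMatch w = some m := (μ.consistent m w).mp hw
    have hb1 : (Q.menPref m).lt (ν.menMatch m) (some w) := by rw [← hw]; exact hworQ
    have hb2 : ¬ (Q.womenPref w).lt (ν.womenMatch w) (some m) := fun hb2 => hν.2 m w ⟨hb1, hb2⟩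
    have hneq : some m ≠ ν.womenMatch w := by
      intro he
      have hc := (ν.consistent m w).mpr he.symm
      rw [hc, hw] at hwor
      exact llt_irrefl _ hwor
    have hQimp : (Q.womenPref w).lt (μ.womenMatch w) (ν.womenMatch w) := by
      rw [hwm]; exact llt_of_le_of_ne _ (lnot_lt _ hb2) hneq
    rcases Classical.em (w ∈ Sw) with hwS | hwS
    · exact h4 w hwS
    · rw [← h2 w hwS]; exact hQimp
  -- the four maps between improving/worsening agents
  let f : {m : M // (P.menPref m).lt (μ.menMatch m) (ν.menMatch m)} →
      {w : W // (P.womenPref w).lt (ν.womenMatch w) (μ.womenMatch w)} :=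
    fun x => ⟨(hA x.1 x.2).choose, (hA x.1 x.2).choose_spec.2⟩
  have hf_spec : ∀ x, ν.menMatch x.1 = some (f x).1 := fun x => (hA x.1 x.2).choose_spec.1
  have hf_inj : Function.Injective f := by
    intro x y hxy
    have hx := (ν.consistent _ _).mp (hf_spec x)
    have hy := (ν.consistent _ _).mp (hf_spec y)
    rw [hxy, hy] at hx
    exact Subtype.ext (by injection hx with h; exact h.symm)
  let g : {w : W // (P.womenPref w).lt (ν.womenMatch w) (μ.womenMatch w)} →
      {m : M // (P.menPref m).lt (μ.menMatch m) (ν.menMatch m)} :=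
    fun x => ⟨(hC x.1 x.2).choose, (hC x.1 x.2).choose_spec.2⟩
  have hg_spec : ∀ x, μ.womenMatch x.1 = some (g x).1 := fun x => (hC x.1 x.2).choose_spec.1
  have hg_inj : Function.Injective g := by
    intro x y hxy
    have hx := (μ.consistent _ _).mpr (hg_spec x)
    have hy := (μ.consistent _ _).mpr (hg_spec y)
    rw [hxy, hy] at hx
    exact Subtype.ext (by injection hx with h; exact h.symm)
  let f' : {w : W // (P.womenPref w).lt (μ.womenMatch w) (ν.womenMatch w)} →
      {m : M // (P.menPref m).lt (ν.menMatch m) (μ.menMatch m)} :=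
    fun x => ⟨(hB x.1 x.2).choose, (hB x.1 x.2).choose_spec.2⟩
  have hf'_spec : ∀ x, ν.womenMatch x.1 = some (f' x).1 := fun x => (hB x.1 x.2).choose_spec.1
  have hf'_inj : Function.Injective f' := by
    intro x y hxy
    have hx := (ν.consistent _ _).mpr (hf'_spec x)
    have hy := (ν.consistent _ _).mpr (hf'_spec y)
    rw [hxy, hy] at hx
    exact Subtype.ext (by injection hx with h; exact h.symm)
  let g' : {m : M // (P.menPref m).lt (ν.menMatch m) (μ.menMatch m)} →
      {w : W // (P.womenPref w).lt (μ.womenMatch w) (ν.womenMatch w)} :=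
    fun x => ⟨(hD x.1 x.2).choose, (hD x.1 x.2).choose_spec.2⟩
  have hg'_spec : ∀ x, μ.menMatch x.1 = some (g' x).1 := fun x => (hD x.1 x.2).choose_spec.1
  have hg'_inj : Function.Injective g' := by
    intro x y hxy
    have hx := (μ.consistent _ _).mp (hg'_spec x)
    have hy := (μ.consistent _ _).mp (hg'_spec y)
    rw [hxy, hy] at hx
    exact Subtype.ext (by injection hx with h; exact h.symm)
  have hg_surj : Function.Surjective g := surj_of_inj_inj hf_inj hg_inj
  have hf_surj : Function.Surjective f := surj_of_inj_inj hg_inj hf_inj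
  have hg'_surj : Function.Surjective g' := surj_of_inj_inj hf'_inj hg'_inj
  have hf'_surj : Function.Surjective f' := surj_of_inj_inj hg'_inj hf'_inj
  constructor
  · intro m
    constructor
    · intro hPn
      by_contra hQn
      have himp : (P.menPref m).lt (μ.menMatch m) (ν.menMatch m) := by
        rcases Classical.em (m ∈ Sm) with hS | hS
        · exact h3 m hS
        · have hIR : (Q.menPref m).le none (ν.menMatch m) := hν.1.1 m
          rw [h1 m hS] at hIR
          rw [hPn]
          exact llt_of_le_of_ne _ hIR (Ne.symm hQn)
      obtain ⟨wx, hwx⟩ := hg_surj ⟨m, himp⟩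
      have hs := hg_spec wx
      rw [hwx] at hs
      have := (μ.consistent m wx.1).mpr hs
      rw [this] at hPn; cases hPn
    · intro hQn
      by_contra hPn
      have hwor : (P.menPref m).lt (ν.menMatch m) (μ.menMatch m) := by
        rw [hQn]
        exact llt_of_le_of_ne _ (hμ.1.1 m) (Ne.symm hPn)
      obtain ⟨wx, hwx⟩ := hf'_surj ⟨m, hwor⟩
      have hs := hf'_spec wx
      rw [hwx] at hs
      have := (ν.consistent m wx.1).mpr hs
      rw [this] at hQn; cases hQn
  · intro w
    constructor
    · intro hPn
      by_contra hQn
      have himp : (P.womenPref w).lt (μ.womenMatch w) (ν.womenMatch w) := by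
        rcases Classical.em (w ∈ Sw) with hS | hS
        · exact h4 w hS
        · have hIR : (Q.womenPref w).le none (ν.womenMatch w) := hν.1.2 w
          rw [h2 w hS] at hIR
          rw [hPn]
          exact llt_of_le_of_ne _ hIR (Ne.symm hQn)
      obtain ⟨mx, hmx⟩ := hg'_surj ⟨w, himp⟩
      have hs := hg'_spec mx
      rw [hmx] at hs
      have := (μ.consistent mx.1 w).mp hs
      rw [this] at hPn; cases hPn
    · intro hQn
      by_contra hPn
      have hwor : (P.womenPref w).lt (ν.womenMatch w) (μ.womenMatch w) := by
        rw [hQn]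
        exact llt_of_le_of_ne _ (hμ.1.2 w) (Ne.symm hPn)
      obtain ⟨mx, hmx⟩ := hf_surj ⟨w, hwor⟩
      have hs := hf_spec mx
      rw [hmx] at hs
      have := (ν.consistent mx.1 w).mp hs
      rw [this] at hQn; cases hQn
end

section
/- Let the preference domain satisfy unrestricted top pairs for men. If a matching rule on this domain is stable and strategy-proof, then it equals the men-proposing deferred acceptance rule on this domain; hence the stable and strategy-proof rule, if it exists, is unique. -/
variable {M W : Type*}

section OrderHelpers
variable {α : Type*} (L : LinearOrder α) {a b c : α}
theorem L_le_of_lt (h : L.lt a b) : L.le a b := @le_of_lt α L.toPreorder a b h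
theorem L_lt_of_le_of_lt (h : L.le a b) (h' : L.lt b c) : L.lt a c :=
  @lt_of_le_of_lt α L.toPreorder a b c h h'
theorem L_lt_of_lt_of_le (h : L.lt a b) (h' : L.le b c) : L.lt a c :=
  @lt_of_lt_of_le α L.toPreorder a b c h h'
theorem L_lt_trans (h : L.lt a b) (h' : L.lt b c) : L.lt a c :=
  @lt_trans α L.toPreorder a b c h h'
theorem L_lt_irrefl (h : L.lt a a) : False := @lt_irrefl α L.toPreorder a h
theorem L_ne_of_lt (h : L.lt a b) : a ≠ b := @ne_of_lt α L.toPreorder a b h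
theorem L_lt_of_le_of_ne (h : L.le a b) (h' : a ≠ b) : L.lt a b :=
  @lt_of_le_of_ne α L.toPartialOrder a b h h'
theorem L_le_of_not_lt (h : ¬ L.lt a b) : L.le b a := (@not_lt α L a b).mp h
theorem L_lt_of_not_le (h : ¬ L.le a b) : L.lt b a := (@not_le α L a b).mp h
theorem L_le_antisymm (h : L.le a b) (h' : L.le b a) : a = b :=
  @le_antisymm α L.toPartialOrder a b h h'
theorem L_lt_asymm (h : L.lt a b) (h' : L.lt b a) : False :=
  @lt_asymm α L.toPreorder a b h h'
end OrderHelpers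

theorem matching_eq_of_menMatch {μ ν : Matching M W}
    (h : ∀ m, μ.menMatch m = ν.menMatch m) : μ = ν := by
  have hw : ∀ w, μ.womenMatch w = ν.womenMatch w := by
    intro w
    cases hμ : μ.womenMatch w with
    | some m =>
      have h1 := (μ.consistent m w).2 hμ
      rw [h m] at h1
      exact ((ν.consistent m w).1 h1).symm
    | none =>
      cases hν : ν.womenMatch w with
      | none => rfl
      | some m =>
        have h1 := (ν.consistent m w).2 hν
        rw [← h m] at h1
        have h2 := (μ.consistent m w).1 h1
        rw [h2] at hμ
        exact absurd hμ (by simp)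
  cases μ; cases ν
  simp only [Matching.mk.injEq]
  exact ⟨funext h, funext hw⟩

/-- If two matchings are stable at the same profile, a man cannot be unmatched
in one and matched in the other (restricted form of the lone-wolf theorem). -/
theorem no_lone_wolf [Fintype M] (P : Profile M W) (μ σ : Matching M W)
    (hμ : Stable μ P) (hσ : Stable σ P) (m₀ : M)
    (h0 : μ.menMatch m₀ = none) (h1 : σ.menMatch m₀ ≠ none) : False := by
  classical
  set S : Finset M :=
    Finset.univ.filter (fun m => (P.menPref m).lt (μ.menMatch m) (σ.menMatch m)) with hS
  have memS : ∀ m, m ∈ S ↔ (P.menPref m).lt (μ.menMatch m) (σ.menMatch m) := by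
    intro m; simp [hS]
  have hm₀S : m₀ ∈ S := by
    rw [memS, h0]
    exact L_lt_of_le_of_ne _ (hσ.1.1 m₀) (Ne.symm h1)
  have key : ∀ m : M, ∃ m' : M, m ∈ S →
      μ.menMatch m' = σ.menMatch m ∧ σ.menMatch m ≠ none ∧ m' ∈ S := by
    intro m
    by_cases hm : m ∈ S
    · have hlt := (memS m).1 hm
      have hσne : σ.menMatch m ≠ none := by
        intro he
        rw [he] at hlt
        exact L_lt_irrefl _ (L_lt_of_le_of_lt _ (hμ.1.1 m) hlt)
      obtain ⟨w, hw⟩ := Option.ne_none_iff_exists'.mp hσne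
      rw [hw] at hlt
      have hσw : σ.womenMatch w = some m := (σ.consistent m w).1 hw
      -- w strictly prefers her μ-partner to m
      have hwm : (P.womenPref w).lt (some m) (μ.womenMatch w) := by
        have hnb := hμ.2 m w
        have hle : (P.womenPref w).le (some m) (μ.womenMatch w) := by
          apply L_le_of_not_lt
          intro hltw
          exact hnb ⟨hlt, hltw⟩
        refine L_lt_of_le_of_ne _ hle ?_
        intro he
        have := (μ.consistent m w).2 he.symm
        rw [this] at hlt
        exact L_lt_irrefl _ hlt
      have hμwne : μ.womenMatch w ≠ none := by
        intro he
        rw [he] at hwm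
        have hIR : (P.womenPref w).le none (some m) := by
          have := hσ.1.2 w; rwa [hσw] at this
        exact L_lt_irrefl _ (L_lt_of_le_of_lt _ hIR hwm)
      obtain ⟨m', hμw⟩ := Option.ne_none_iff_exists'.mp hμwne
      rw [hμw] at hwm
      have hμm' : μ.menMatch m' = some w := (μ.consistent m' w).2 hμw
      have hmne : m ≠ m' := by
        intro he; subst he; exact L_lt_irrefl _ hwm
      -- m' strictly prefers his σ-partner to w
      have hm'S : m' ∈ S := by
        rw [memS, hμm']
        have hnb := hσ.2 m' w
        have hle : (P.menPref m').le (some w) (σ.menMatch m') := by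
          apply L_le_of_not_lt
          intro hltm
          refine hnb ⟨hltm, ?_⟩
          rw [hσw]; exact hwm
        refine L_lt_of_le_of_ne _ hle ?_
        intro he
        have := (σ.consistent m' w).1 he.symm
        rw [this] at hσw
        exact hmne (Option.some_injective _ hσw).symm
      exact ⟨m', fun _ => ⟨hw ▸ hμm', hσne, hm'S⟩⟩
    · exact ⟨m, fun h => absurd h hm⟩
  choose g hg using key
  have hmaps : ∀ m ∈ S, g m ∈ S.erase m₀ := by
    intro m hm
    obtain ⟨he, hne, hmem⟩ := hg m hm
    refine Finset.mem_erase.2 ⟨?_, hmem⟩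
    intro heq
    rw [heq, h0] at he
    exact hne he.symm
  have hinj : Set.InjOn g ↑S := by
    intro m1 hm1 m2 hm2 heq
    obtain ⟨he1, hne1, -⟩ := hg m1 (Finset.mem_coe.1 hm1)
    obtain ⟨he2, -, -⟩ := hg m2 (Finset.mem_coe.1 hm2)
    rw [heq] at he1
    have hss : σ.menMatch m1 = σ.menMatch m2 := he1.symm.trans he2
    obtain ⟨w, hw⟩ := Option.ne_none_iff_exists'.mp hne1
    have hw2 : σ.menMatch m2 = some w := hss ▸ hw
    have c1 := (σ.consistent m1 w).1 hw
    have c2 := (σ.consistent m2 w).1 hw2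
    exact Option.some_injective _ (c1.symm.trans c2)
  have hcard := Finset.card_le_card_of_injOn g hmaps hinj
  have hlt := Finset.card_erase_lt_of_mem hm₀S
  omega


/-- on a domain with unrestricted top pairs for men, any stable
and strategy-proof matching rule coincides with the MPDA rule on the domain. -/
theorem stable_sp_unique_is_mpda [Fintype M] [Fintype W]
    [DecidableEq M] [DecidableEq W] (D : Domain M W)
    (hUTP : UnrestrictedTopPairsMen D)
    (phi : Profile M W → Matching M W)
    (hstable : StableOn D phi) (hsp : StrategyProofOn D phi) :
    ∀ P : Profile M W, D.mem P → phi P = mpda P := by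
  intro P hP
  -- Step 1: φ P is the men-optimal stable matching at P.
  have hopt : MenOptimalStable (phi P) P := by
    refine ⟨hstable P hP, ?_⟩
    intro ν hν m
    by_contra hcon
    have hlt : (P.menPref m).lt ((phi P).menMatch m) (ν.menMatch m) :=
      L_lt_of_not_le _ hcon
    have hνne : ν.menMatch m ≠ none := by
      intro he
      rw [he] at hlt
      exact L_lt_irrefl _ (L_lt_of_le_of_lt _ ((hstable P hP).1.1 m) hlt)
    obtain ⟨w, hw⟩ := Option.ne_none_iff_exists'.mp hνne
    rw [hw] at hlt
    obtain ⟨p, hpD, hpw, hptop⟩ := (hUTP m).2.1 w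
    set P' := P.updateMan m p with hP'def
    have hP'm : P'.menPref m = p := by
      rw [hP'def]; exact Function.update_self m p P.menPref
    have hP'other : ∀ m'', m'' ≠ m → P'.menPref m'' = P.menPref m'' := by
      intro m'' h
      rw [hP'def]; exact Function.update_of_ne h p P.menPref
    have hP'w : P'.womenPref = P.womenPref := by rw [hP'def]; rfl
    have hP'mem : D.mem P' := by
      constructor
      · intro m''
        by_cases h : m'' = m
        · subst h; rw [hP'm]; exact hpD
        · rw [hP'other m'' h]; exact hP.1 m''
      · intro w''; exact hP.2 w''
    have hst' := hstable P' hP'mem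
    have hsp' := (hsp P hP).1 m p hpD
    -- the deviating man must be unmatched under φ P'
    have h0 : (phi P').menMatch m = none := by
      by_contra hne
      obtain ⟨w', hw'⟩ := Option.ne_none_iff_exists'.mp hne
      by_cases hww : w' = w
      · subst hww
        rw [hw'] at hsp'
        exact L_lt_irrefl _ (L_lt_of_le_of_lt _ hsp' hlt)
      · have hIR := hst'.1.1 m
        rw [hw', hP'm] at hIR
        have htop := hptop (some w') (by simpa using hww) (by simp)
        exact L_lt_irrefl _ (L_lt_of_le_of_lt _ hIR htop)
    -- ν stays stable at the reported profile P'
    have hνP' : Stable ν P' := by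
      constructor
      · constructor
        · intro m''
          by_cases h : m'' = m
          · subst h; rw [hP'm, hw]; exact L_le_of_lt _ hpw
          · rw [hP'other m'' h]; exact hν.1.1 m''
        · intro w''; rw [hP'w]; exact hν.1.2 w''
      · intro m'' w'' hb
        by_cases h : m'' = m
        · subst h
          have hb1 := hb.1
          rw [hP'm, hw] at hb1
          by_cases hww : w'' = w
          · subst hww; exact L_lt_irrefl _ hb1
          · have htop := hptop (some w'') (by simpa using hww) (by simp)
            exact L_lt_asymm _ hb1 (L_lt_trans _ htop hpw)
        · refine hν.2 m'' w'' ⟨?_, ?_⟩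
          · have := hb.1; rwa [hP'other m'' h] at this
          · have := hb.2; rwa [hP'w] at this
    exact no_lone_wolf P' (phi P') ν hst' hνP' m h0 (by rw [hw]; simp)
  -- Step 2: mpda P is also men-optimal stable, and such a matching is unique.
  have hex : ∃ μ : Matching M W, MenOptimalStable μ P := ⟨phi P, hopt⟩
  have hch : MenOptimalStable (mpda P) P := by
    simp only [mpda]
    rw [dif_pos hex]
    exact hex.choose_spec
  apply matching_eq_of_menMatch
  intro m
  exact L_le_antisymm _ (hch.2 (phi P) hopt.1 m) (hopt.2 (mpda P) hch.1 m)
end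

section
/- If the preference domain satisfies unrestricted top pairs for both men and women, then no stable matching rule on the domain is strategy-proof (with at least two men and two women). -/
variable {M W : Type*}

section aux

private lemma lo_lt_trans {α : Type*} (o : LinearOrder α) {a b c : α}
    (h1 : o.lt a b) (h2 : o.lt b c) : o.lt a c :=
  @lt_trans _ o.toPartialOrder.toPreorder _ _ _ h1 h2

private lemma lo_absurd {α : Type*} (o : LinearOrder α) {a b : α}
    (h1 : o.le a b) (h2 : o.lt b a) : False :=
  ((@lt_iff_le_not_ge _ o.toPartialOrder.toPreorder _ _).1 h2).2 h1

private lemma man_match_none {M W : Type*} (μ : Matching M W) (Q : Profile M W)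
    (hIR : IndividuallyRational μ Q) (m : M)
    (h : ∀ z : Option W, z ≠ none → (Q.menPref m).lt z none) : μ.menMatch m = none := by
  by_contra hne
  exact lo_absurd _ (hIR.1 m) (h _ hne)

private lemma woman_match_none {M W : Type*} (μ : Matching M W) (Q : Profile M W)
    (hIR : IndividuallyRational μ Q) (w : W)
    (h : ∀ z : Option M, z ≠ none → (Q.womenPref w).lt z none) : μ.womenMatch w = none := by
  by_contra hne
  exact lo_absurd _ (hIR.2 w) (h _ hne)

private lemma women_match_cases {M W : Type*} (μ : Matching M W) {m1 m2 : M}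
    (h : ∀ m, m ≠ m1 → m ≠ m2 → μ.menMatch m = none) (w : W) :
    μ.womenMatch w = none ∨ μ.womenMatch w = some m1 ∨ μ.womenMatch w = some m2 := by
  rcases hw : μ.womenMatch w with _ | m
  · exact Or.inl rfl
  · by_cases h1 : m = m1
    · exact Or.inr (Or.inl (by rw [h1]))
    · by_cases h2 : m = m2
      · exact Or.inr (Or.inr (by rw [h2]))
      · exact absurd ((μ.consistent m w).2 hw) (by rw [h m h1 h2]; simp)

private lemma men_match_cases {M W : Type*} (μ : Matching M W) {w1 w2 : W}
    (h : ∀ w, w ≠ w1 → w ≠ w2 → μ.womenMatch w = none) (m : M) :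
    μ.menMatch m = none ∨ μ.menMatch m = some w1 ∨ μ.menMatch m = some w2 := by
  rcases hm : μ.menMatch m with _ | w
  · exact Or.inl rfl
  · by_cases h1 : w = w1
    · exact Or.inr (Or.inl (by rw [h1]))
    · by_cases h2 : w = w2
      · exact Or.inr (Or.inr (by rw [h2]))
      · exact absurd ((μ.consistent m w).1 hm) (by rw [h w h1 h2]; simp)

end aux

/-- on a domain with unrestricted top pairs for both sides (with at
least two men and two women), no stable matching rule is strategy-proof. -/
theorem no_stable_sp_of_utp_both [Fintype M] [Fintype W]
    [DecidableEq M] [DecidableEq W] (D : Domain M W)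
    (hM : 2 ≤ Fintype.card M) (hW : 2 ≤ Fintype.card W)
    (hUTPm : UnrestrictedTopPairsMen D) (hUTPw : UnrestrictedTopPairsWomen D)
    (phi : Profile M W → Matching M W) (hstable : StableOn D phi) :
    ¬ StrategyProofOn D phi := by
  intro hSP
  obtain ⟨m1, m2, hm12⟩ := Fintype.exists_pair_of_one_lt_card (by omega : 1 < Fintype.card M)
  obtain ⟨w1, w2, hw12⟩ := Fintype.exists_pair_of_one_lt_card (by omega : 1 < Fintype.card W)
  obtain ⟨pm1, hpm1D, hpm1a, hpm1b⟩ := (hUTPm m1).1 w1 w2 hw12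
  obtain ⟨pm2, hpm2D, hpm2a, hpm2b⟩ := (hUTPm m2).1 w2 w1 hw12.symm
  obtain ⟨pw1, hpw1D, hpw1a, hpw1b⟩ := (hUTPw w1).1 m2 m1 hm12.symm
  obtain ⟨pw2, hpw2D, hpw2a, hpw2b⟩ := (hUTPw w2).1 m1 m2 hm12
  obtain ⟨q1, hq1D, hq1a, hq1b⟩ := (hUTPw w1).2.1 m2
  obtain ⟨p1, hp1D, hp1a, hp1b⟩ := (hUTPm m1).2.1 w1
  choose pEm hpEmD hpEm using fun m => (hUTPm m).2.2
  choose pEw hpEwD hpEw using fun w => (hUTPw w).2.2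
  -- derived preference facts
  have hpm1_none_w2 : pm1.lt none (some w2) := hpm1b none (by simp) (by simp)
  have hpm1_none_w1 : pm1.lt none (some w1) := lo_lt_trans pm1 hpm1_none_w2 hpm1a
  have hpm2_none_w1 : pm2.lt none (some w1) := hpm2b none (by simp) (by simp)
  have hpm2_none_w2 : pm2.lt none (some w2) := lo_lt_trans pm2 hpm2_none_w1 hpm2a
  have hpw1_none_m1 : pw1.lt none (some m1) := hpw1b none (by simp) (by simp)
  have hpw2_none_m2 : pw2.lt none (some m2) := hpw2b none (by simp) (by simp)
  have hpw2_none_m1 : pw2.lt none (some m1) := lo_lt_trans pw2 hpw2_none_m2 hpw2a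
  set P : Profile M W :=
    ⟨fun m => if m = m1 then pm1 else if m = m2 then pm2 else pEm m,
     fun w => if w = w1 then pw1 else if w = w2 then pw2 else pEw w⟩ with hPdef
  have hPm1 : P.menPref m1 = pm1 := by rw [hPdef]; simp
  have hPm2 : P.menPref m2 = pm2 := by rw [hPdef]; simp [Ne.symm hm12]
  have hPmE : ∀ m, m ≠ m1 → m ≠ m2 → P.menPref m = pEm m := by
    intro m h1 h2; rw [hPdef]; simp [h1, h2]
  have hPw1 : P.womenPref w1 = pw1 := by rw [hPdef]; simp
  have hPw2 : P.womenPref w2 = pw2 := by rw [hPdef]; simp [Ne.symm hw12]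
  have hPwE : ∀ w, w ≠ w1 → w ≠ w2 → P.womenPref w = pEw w := by
    intro w h1 h2; rw [hPdef]; simp [h1, h2]
  have hPmem : D.mem P := by
    constructor
    · intro m
      by_cases h1 : m = m1
      · subst h1; rw [hPm1]; exact hpm1D
      · by_cases h2 : m = m2
        · subst h2; rw [hPm2]; exact hpm2D
        · rw [hPmE m h1 h2]; exact hpEmD m
    · intro w
      by_cases h1 : w = w1
      · subst h1; rw [hPw1]; exact hpw1D
      · by_cases h2 : w = w2
        · subst h2; rw [hPw2]; exact hpw2D
        · rw [hPwE w h1 h2]; exact hpEwD w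
  have hS := hstable P hPmem
  have h0m : ∀ m, m ≠ m1 → m ≠ m2 → (phi P).menMatch m = none := fun m h1 h2 =>
    man_match_none _ _ hS.1 m (fun z hz => by rw [hPmE m h1 h2]; exact hpEm m z hz)
  have h0w : ∀ w, w ≠ w1 → w ≠ w2 → (phi P).womenMatch w = none := fun w h1 h2 =>
    woman_match_none _ _ hS.1 w (fun z hz => by rw [hPwE w h1 h2]; exact hpEw w z hz)
  -- at P, woman w1 is matched to m1 or m2
  have hW1 : (phi P).womenMatch w1 = some m1 ∨ (phi P).womenMatch w1 = some m2 := by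
    rcases women_match_cases (phi P) h0m w1 with h | h | h
    · exfalso
      have hm1lt : (P.menPref m1).lt ((phi P).menMatch m1) (some w1) := by
        rw [hPm1]
        rcases men_match_cases (phi P) h0w m1 with hm | hm | hm
        · rw [hm]; exact hpm1_none_w1
        · exfalso; have h2 := ((phi P).consistent m1 w1).1 hm; rw [h] at h2; simp at h2
        · rw [hm]; exact hpm1a
      exact hS.2 m1 w1 ⟨hm1lt, by rw [hPw1, h]; exact hpw1_none_m1⟩
    · exact Or.inl h
    · exact Or.inr h
  rcases hW1 with hA | hB
  · -- Case A : w1 is matched to m1; w1 manipulates via q1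
    have hsp := (hSP P hPmem).2 w1 q1 hq1D
    rw [hPw1, hA] at hsp
    set P' := P.updateWoman w1 q1 with hP'def
    have hmkeep : ∀ m, P'.menPref m = P.menPref m := fun _ => rfl
    have hw1q : P'.womenPref w1 = q1 := by
      rw [hP'def]; simp [Profile.updateWoman]
    have hwkeep : ∀ w, w ≠ w1 → P'.womenPref w = P.womenPref w := fun w h => by
      rw [hP'def]; simp [Profile.updateWoman, Function.update_of_ne h]
    have hP'mem : D.mem P' := by
      refine ⟨fun m => by rw [hmkeep]; exact hPmem.1 m, fun w => ?_⟩
      by_cases h1 : w = w1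
      · subst h1; rw [hw1q]; exact hq1D
      · rw [hwkeep w h1]; exact hPmem.2 w
    have hS' := hstable P' hP'mem
    have h0m' : ∀ m, m ≠ m1 → m ≠ m2 → (phi P').menMatch m = none := fun m h1 h2 =>
      man_match_none _ _ hS'.1 m (fun z hz => by
        rw [hmkeep, hPmE m h1 h2]; exact hpEm m z hz)
    have h0w' : ∀ w, w ≠ w1 → w ≠ w2 → (phi P').womenMatch w = none := fun w h1 h2 =>
      woman_match_none _ _ hS'.1 w (fun z hz => by
        rw [hwkeep w h1, hPwE w h1 h2]; exact hpEw w z hz)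
    have hν1 : (phi P').womenMatch w1 = some m2 := by
      rcases women_match_cases (phi P') h0m' w1 with h | h | h
      · exfalso
        rcases men_match_cases (phi P') h0w' m2 with hm | hm | hm
        · exact hS'.2 m2 w1 ⟨by rw [hmkeep, hPm2, hm]; exact hpm2_none_w1,
            by rw [hw1q, h]; exact hq1a⟩
        · have h2 := ((phi P').consistent m2 w1).1 hm; rw [h] at h2; simp at h2
        · have hw2 : (phi P').womenMatch w2 = some m2 := ((phi P').consistent m2 w2).1 hm
          have hm1n : (phi P').menMatch m1 = none := by
            rcases men_match_cases (phi P') h0w' m1 with hm' | hm' | hm'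
            · exact hm'
            · exfalso; have h2 := ((phi P').consistent m1 w1).1 hm'; rw [h] at h2; simp at h2
            · exfalso; have h2 := ((phi P').consistent m1 w2).1 hm'
              rw [hw2] at h2; simp at h2; exact hm12 h2.symm
          exact hS'.2 m1 w2 ⟨by rw [hmkeep, hPm1, hm1n]; exact hpm1_none_w2,
            by rw [hwkeep w2 (Ne.symm hw12), hPw2, hw2]; exact hpw2a⟩
      · exfalso
        have hIR := hS'.1.2 w1
        rw [hw1q, h] at hIR
        exact lo_absurd q1 hIR (hq1b (some m1) (by simpa using hm12) (by simp))
      · exact h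
    rw [hν1] at hsp
    exact lo_absurd pw1 hsp hpw1a
  · -- Case B : w1 is matched to m2; then m1 is matched to w2 and manipulates via p1
    have hm2w1 : (phi P).menMatch m2 = some w1 := ((phi P).consistent m2 w1).2 hB
    have hm1w2 : (phi P).menMatch m1 = some w2 := by
      rcases men_match_cases (phi P) h0w m1 with hm | hm | hm
      · exfalso
        have hw2n : (phi P).womenMatch w2 = none := by
          rcases women_match_cases (phi P) h0m w2 with h | h | h
          · exact h
          · exfalso; have h2 := ((phi P).consistent m1 w2).2 h; rw [hm] at h2; simp at h2
          · exfalso; have h2 := ((phi P).consistent m2 w2).2 h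
            rw [hm2w1] at h2; simp at h2; exact hw12 h2
        exact hS.2 m1 w2 ⟨by rw [hPm1, hm]; exact hpm1_none_w2,
          by rw [hPw2, hw2n]; exact hpw2_none_m1⟩
      · exfalso
        have h2 := ((phi P).consistent m1 w1).1 hm; rw [hB] at h2; simp at h2
        exact hm12 h2.symm
      · exact hm
    have hsp := (hSP P hPmem).1 m1 p1 hp1D
    rw [hPm1, hm1w2] at hsp
    set P'' := P.updateMan m1 p1 with hP''def
    have hwkeep2 : ∀ w, P''.womenPref w = P.womenPref w := fun _ => rfl
    have hm1p : P''.menPref m1 = p1 := by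
      rw [hP''def]; simp [Profile.updateMan]
    have hmkeep2 : ∀ m, m ≠ m1 → P''.menPref m = P.menPref m := fun m h => by
      rw [hP''def]; simp [Profile.updateMan, Function.update_of_ne h]
    have hP''mem : D.mem P'' := by
      refine ⟨fun m => ?_, fun w => by rw [hwkeep2]; exact hPmem.2 w⟩
      by_cases h1 : m = m1
      · subst h1; rw [hm1p]; exact hp1D
      · rw [hmkeep2 m h1]; exact hPmem.1 m
    have hS'' := hstable P'' hP''mem
    have h0m'' : ∀ m, m ≠ m1 → m ≠ m2 → (phi P'').menMatch m = none := fun m h1 h2 =>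
      man_match_none _ _ hS''.1 m (fun z hz => by
        rw [hmkeep2 m h1, hPmE m h1 h2]; exact hpEm m z hz)
    have h0w'' : ∀ w, w ≠ w1 → w ≠ w2 → (phi P'').womenMatch w = none := fun w h1 h2 =>
      woman_match_none _ _ hS''.1 w (fun z hz => by
        rw [hwkeep2, hPwE w h1 h2]; exact hpEw w z hz)
    have hν2 : (phi P'').menMatch m1 = some w1 := by
      rcases men_match_cases (phi P'') h0w'' m1 with h | h | h
      · exfalso
        rcases women_match_cases (phi P'') h0m'' w2 with hw | hw | hw
        · have hm2lt : (P''.menPref m2).lt ((phi P'').menMatch m2) (some w2) := by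
            rw [hmkeep2 m2 (Ne.symm hm12), hPm2]
            rcases men_match_cases (phi P'') h0w'' m2 with hm | hm | hm
            · rw [hm]; exact hpm2_none_w2
            · rw [hm]; exact hpm2a
            · exfalso; have h2 := ((phi P'').consistent m2 w2).1 hm; rw [hw] at h2; simp at h2
          exact hS''.2 m2 w2 ⟨hm2lt, by rw [hwkeep2, hPw2, hw]; exact hpw2_none_m2⟩
        · have h2 := ((phi P'').consistent m1 w2).2 hw; rw [h] at h2; simp at h2
        · have hm2w2 : (phi P'').menMatch m2 = some w2 := ((phi P'').consistent m2 w2).2 hw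
          have hw1n : (phi P'').womenMatch w1 = none := by
            rcases women_match_cases (phi P'') h0m'' w1 with h' | h' | h'
            · exact h'
            · exfalso; have h2 := ((phi P'').consistent m1 w1).2 h'; rw [h] at h2; simp at h2
            · exfalso; have h2 := ((phi P'').consistent m2 w1).2 h'
              rw [hm2w2] at h2; simp at h2; exact hw12 h2.symm
          exact hS''.2 m1 w1 ⟨by rw [hm1p, h]; exact hp1a,
            by rw [hwkeep2, hPw1, hw1n]; exact hpw1_none_m1⟩
      · exact h
      · exfalso
        have hIR := hS''.1.1 m1
        rw [h, hm1p] at hIR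
        exact lo_absurd p1 hIR (hp1b (some w2) (by simpa using hw12.symm) (by simp))
    rw [hν2] at hsp
    exact lo_absurd pm1 hsp hpm1a
end

section
/- On the unrestricted preference domain of the marriage market (all strict linear orders over the other side plus the outside option, for every agent, with at least two men and two women), no stable matching rule is strategy-proof (Roth's impossibility theorem with outside options). -/
variable {M W : Type*}

section RothAux

variable {α : Type*} [Fintype α] [DecidableEq α]

/-- Build a linear order on `Option α` from a priority function (higher = better),
breaking ties by an arbitrary fixed enumeration. -/
noncomputable def mkPref (pr : Option α → ℕ) : LinearOrder (Option α) :=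
  LinearOrder.lift' (fun z => toLex (pr z, Fintype.equivFin (Option α) z))
    (fun a b h => by
      have h2 : (Fintype.equivFin (Option α)) a = (Fintype.equivFin (Option α)) b := by
        have := congrArg (fun x => (ofLex x).2) h
        simpa using this
      exact (Fintype.equivFin (Option α)).injective h2)

lemma mkPref_lt (pr : Option α → ℕ) {a b : Option α} (h : pr a < pr b) :
    (mkPref pr).lt a b := by
  show toLex (pr a, Fintype.equivFin (Option α) a) < toLex (pr b, Fintype.equivFin (Option α) b)
  exact Prod.Lex.left _ _ h

lemma mkPref_not_le (pr : Option α → ℕ) {a b : Option α} (h : pr b < pr a) :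
    ¬ (mkPref pr).le a b := by
  letI := mkPref pr
  exact not_le_of_gt (mkPref_lt pr h)

lemma mkPref_le_pr (pr : Option α → ℕ) {a b : Option α} (h : (mkPref pr).le a b) :
    pr a ≤ pr b := by
  by_contra hc
  exact mkPref_not_le pr (lt_of_not_ge hc) h

/-- priority function: `x` top (3), `y` second (2), outside option third (1), rest 0. -/
def pr3 {β : Type*} [DecidableEq β] (x y : β) : Option β → ℕ := fun z =>
  if z = some x then 3 else if z = some y then 2 else if z = none then 1 else 0

/-- priority function: `x` top (2), outside option second (1), rest 0. -/
def pr2 {β : Type*} [DecidableEq β] (x : β) : Option β → ℕ := fun z =>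
  if z = some x then 2 else if z = none then 1 else 0

lemma pr3_pos {β : Type*} [DecidableEq β] {x y : β} {z : Option β} (h : 1 ≤ pr3 x y z) :
    z = some x ∨ z = some y ∨ z = none := by
  by_contra hc
  push_neg at hc
  simp [pr3, hc.1, hc.2.1, hc.2.2] at h

lemma pr2_pos {β : Type*} [DecidableEq β] {x : β} {z : Option β} (h : 1 ≤ pr2 x z) :
    z = some x ∨ z = none := by
  by_contra hc
  push_neg at hc
  simp [pr2, hc.1, hc.2] at h

/-- The Roth 2×2 profile. -/
noncomputable def rothP [Fintype M] [Fintype W] [DecidableEq M] [DecidableEq W]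
    (m1 m2 : M) (w1 w2 : W) : Profile M W :=
  ⟨fun m => mkPref (if m = m1 then pr3 w1 w2 else if m = m2 then pr3 w2 w1 else
      (fun z => if z = none then 1 else 0)),
   fun w => mkPref (if w = w1 then pr3 m2 m1 else if w = w2 then pr3 m1 m2 else
      (fun z => if z = none then 1 else 0))⟩

section Main

variable [Fintype M] [Fintype W] [DecidableEq M] [DecidableEq W]
variable {m1 m2 : M} {w1 w2 : W}

lemma rothP_menPref1 : (rothP m1 m2 w1 w2).menPref m1 = mkPref (pr3 w1 w2) := by
  simp [rothP]

lemma rothP_menPref2 (hm : m1 ≠ m2) :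
    (rothP m1 m2 w1 w2).menPref m2 = mkPref (pr3 w2 w1) := by
  simp [rothP, hm.symm]

lemma rothP_womenPref1 : (rothP m1 m2 w1 w2).womenPref w1 = mkPref (pr3 m2 m1) := by
  simp [rothP]

lemma rothP_womenPref2 (hw : w1 ≠ w2) :
    (rothP m1 m2 w1 w2).womenPref w2 = mkPref (pr3 m1 m2) := by
  simp [rothP, hw.symm]

lemma pr3_none {β : Type*} [DecidableEq β] (x y : β) : pr3 x y none = 1 := by simp [pr3]

lemma pr3_fst {β : Type*} [DecidableEq β] (x y : β) : pr3 x y (some x) = 3 := by simp [pr3]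

lemma pr3_snd {β : Type*} [DecidableEq β] {x y : β} (h : x ≠ y) : pr3 x y (some y) = 2 := by
  simp [pr3, h.symm]

lemma pr2_none {β : Type*} [DecidableEq β] (x : β) : pr2 x none = 1 := by simp [pr2]

lemma pr2_fst {β : Type*} [DecidableEq β] (x : β) : pr2 x (some x) = 2 := by simp [pr2]

/-- Key structure lemma: any stable matching at `rothP` matches `m1,m2` with `w1,w2`
in one of the two ways. -/
lemma rothP_stable_cases (hm : m1 ≠ m2) (hw : w1 ≠ w2) {μ : Matching M W}
    (hs : Stable μ (rothP m1 m2 w1 w2)) :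
    (μ.menMatch m1 = some w1 ∧ μ.menMatch m2 = some w2) ∨
    (μ.menMatch m1 = some w2 ∧ μ.menMatch m2 = some w1) := by
  obtain ⟨⟨irm, irw⟩, hb⟩ := hs
  have hM1 : μ.menMatch m1 = some w1 ∨ μ.menMatch m1 = some w2 ∨ μ.menMatch m1 = none := by
    refine pr3_pos ?_
    have := mkPref_le_pr (pr3 w1 w2) (by rw [← rothP_menPref1 (m2 := m2)]; exact irm m1)
    simpa [pr3_none] using this
  have hM2 : μ.menMatch m2 = some w2 ∨ μ.menMatch m2 = some w1 ∨ μ.menMatch m2 = none := by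
    refine pr3_pos ?_
    have := mkPref_le_pr (pr3 w2 w1) (by rw [← rothP_menPref2 hm]; exact irm m2)
    simpa [pr3_none] using this
  have hW1 : μ.womenMatch w1 = some m2 ∨ μ.womenMatch w1 = some m1 ∨ μ.womenMatch w1 = none := by
    refine pr3_pos ?_
    have := mkPref_le_pr (pr3 m2 m1) (by rw [← rothP_womenPref1 (w2 := w2)]; exact irw w1)
    simpa [pr3_none] using this
  have hW2 : μ.womenMatch w2 = some m1 ∨ μ.womenMatch w2 = some m2 ∨ μ.womenMatch w2 = none := by
    refine pr3_pos ?_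
    have := mkPref_le_pr (pr3 m1 m2) (by rw [← rothP_womenPref2 hw]; exact irw w2)
    simpa [pr3_none] using this
  -- first: m1 is matched
  have hne1 : μ.menMatch m1 ≠ none := by
    intro h0
    rcases hW1 with h1 | h1 | h1
    · -- w1 matched to m2; then look at w2
      have hm2w1 : μ.menMatch m2 = some w1 := (μ.consistent m2 w1).2 h1
      rcases hW2 with h2 | h2 | h2
      · have := (μ.consistent m1 w2).2 h2
        rw [h0] at this; exact absurd this (by simp)
      · have := (μ.consistent m2 w2).2 h2
        rw [hm2w1] at this
        exact hw (Option.some.inj this)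
      · -- (m1,w2) blocks
        refine hb m1 w2 ⟨?_, ?_⟩
        · rw [rothP_menPref1 (m2 := m2), h0]
          exact mkPref_lt _ (by rw [pr3_none, pr3_snd hw]; norm_num)
        · rw [rothP_womenPref2 hw, h2]
          exact mkPref_lt _ (by rw [pr3_none, pr3_fst]; norm_num)
    · have := (μ.consistent m1 w1).2 h1
      rw [h0] at this; exact absurd this (by simp)
    · -- (m1,w1) blocks
      refine hb m1 w1 ⟨?_, ?_⟩
      · rw [rothP_menPref1 (m2 := m2), h0]
        exact mkPref_lt _ (by rw [pr3_none, pr3_fst]; norm_num)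
      · rw [rothP_womenPref1 (w2 := w2), h1]
        exact mkPref_lt _ (by rw [pr3_none, pr3_snd hm.symm]; norm_num)
  rcases hM1 with h1 | h1 | h1
  · -- m1 ↦ w1; show m2 ↦ w2
    left
    refine ⟨h1, ?_⟩
    rcases hM2 with h2 | h2 | h2
    · exact h2
    · have ha := (μ.consistent m2 w1).1 h2
      have hb' := (μ.consistent m1 w1).1 h1
      rw [ha] at hb'
      exact absurd (Option.some.inj hb') hm.symm
    · -- m2 unmatched; look at w2
      exfalso
      rcases hW2 with h3 | h3 | h3
      · have := (μ.consistent m1 w2).2 h3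
        rw [h1] at this
        exact hw (Option.some.inj this)
      · have := (μ.consistent m2 w2).2 h3
        rw [h2] at this; exact absurd this (by simp)
      · -- (m2,w2) blocks
        refine hb m2 w2 ⟨?_, ?_⟩
        · rw [rothP_menPref2 hm, h2]
          exact mkPref_lt _ (by rw [pr3_none, pr3_fst]; norm_num)
        · rw [rothP_womenPref2 hw, h3]
          exact mkPref_lt _ (by rw [pr3_none, pr3_snd hm]; norm_num)
  · -- m1 ↦ w2; show m2 ↦ w1
    right
    refine ⟨h1, ?_⟩
    rcases hM2 with h2 | h2 | h2
    · have ha := (μ.consistent m2 w2).1 h2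
      have hb' := (μ.consistent m1 w2).1 h1
      rw [ha] at hb'
      exact absurd (Option.some.inj hb') hm.symm
    · exact h2
    · exfalso
      rcases hW1 with h3 | h3 | h3
      · have := (μ.consistent m2 w1).2 h3
        rw [h2] at this; exact absurd this (by simp)
      · have := (μ.consistent m1 w1).2 h3
        rw [h1] at this
        exact hw (Option.some.inj this).symm
      · -- (m2,w1) blocks
        refine hb m2 w1 ⟨?_, ?_⟩
        · rw [rothP_menPref2 hm, h2]
          exact mkPref_lt _ (by rw [pr3_none, pr3_snd hw.symm]; norm_num)
        · rw [rothP_womenPref1 (w2 := w2), h3]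
          exact mkPref_lt _ (by rw [pr3_none, pr3_fst]; norm_num)
  · exact absurd h1 hne1

/-- After w1 truncates to `m2 ≻ ∅`, any stable matching gives her `m2`. -/
lemma rothQw_stable (hm : m1 ≠ m2) (hw : w1 ≠ w2) {μ : Matching M W}
    (hs : Stable μ ((rothP m1 m2 w1 w2).updateWoman w1 (mkPref (pr2 m2)))) :
    μ.womenMatch w1 = some m2 := by
  set Q := (rothP m1 m2 w1 w2).updateWoman w1 (mkPref (pr2 m2)) with hQ
  have hQm1 : Q.menPref m1 = mkPref (pr3 w1 w2) := by
    rw [hQ]; exact rothP_menPref1 (m2 := m2)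
  have hQm2 : Q.menPref m2 = mkPref (pr3 w2 w1) := by
    rw [hQ]; exact rothP_menPref2 hm
  have hQw1 : Q.womenPref w1 = mkPref (pr2 m2) := by
    simp [hQ, Profile.updateWoman]
  have hQw2 : Q.womenPref w2 = mkPref (pr3 m1 m2) := by
    simp only [hQ, Profile.updateWoman, Function.update_of_ne hw.symm]
    exact rothP_womenPref2 hw
  obtain ⟨⟨irm, irw⟩, hb⟩ := hs
  have hW1 : μ.womenMatch w1 = some m2 ∨ μ.womenMatch w1 = none := by
    refine pr2_pos ?_
    have := mkPref_le_pr (pr2 m2) (by rw [← hQw1]; exact irw w1)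
    simpa [pr2_none] using this
  rcases hW1 with h1 | h1
  · exact h1
  exfalso
  have hM2 : μ.menMatch m2 = some w2 ∨ μ.menMatch m2 = some w1 ∨ μ.menMatch m2 = none := by
    refine pr3_pos ?_
    have := mkPref_le_pr (pr3 w2 w1) (by rw [← hQm2]; exact irm m2)
    simpa [pr3_none] using this
  rcases hM2 with h2 | h2 | h2
  · -- m2 ↦ w2; then look at m1
    have hw2 : μ.womenMatch w2 = some m2 := (μ.consistent m2 w2).1 h2
    have hM1 : μ.menMatch m1 = some w1 ∨ μ.menMatch m1 = some w2 ∨ μ.menMatch m1 = none := by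
      refine pr3_pos ?_
      have := mkPref_le_pr (pr3 w1 w2) (by rw [← hQm1]; exact irm m1)
      simpa [pr3_none] using this
    rcases hM1 with h3 | h3 | h3
    · have := (μ.consistent m1 w1).1 h3
      rw [h1] at this; exact absurd this.symm (by simp)
    · have := (μ.consistent m1 w2).1 h3
      rw [hw2] at this
      exact hm (Option.some.inj this).symm
    · -- (m1,w2) blocks
      refine hb m1 w2 ⟨?_, ?_⟩
      · rw [hQm1, h3]
        exact mkPref_lt _ (by rw [pr3_none, pr3_snd hw]; norm_num)
      · rw [hQw2, hw2]
        exact mkPref_lt _ (by rw [pr3_snd hm, pr3_fst]; norm_num)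
  · have := (μ.consistent m2 w1).1 h2
    rw [h1] at this; exact absurd this.symm (by simp)
  · -- (m2,w1) blocks
    refine hb m2 w1 ⟨?_, ?_⟩
    · rw [hQm2, h2]
      exact mkPref_lt _ (by rw [pr3_none, pr3_snd hw.symm]; norm_num)
    · rw [hQw1, h1]
      exact mkPref_lt _ (by rw [pr2_none, pr2_fst]; norm_num)

/-- After m1 truncates to `w1 ≻ ∅`, any stable matching gives him `w1`. -/
lemma rothQm_stable (hm : m1 ≠ m2) (hw : w1 ≠ w2) {μ : Matching M W}
    (hs : Stable μ ((rothP m1 m2 w1 w2).updateMan m1 (mkPref (pr2 w1)))) :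
    μ.menMatch m1 = some w1 := by
  set Q := (rothP m1 m2 w1 w2).updateMan m1 (mkPref (pr2 w1)) with hQ
  have hQm1 : Q.menPref m1 = mkPref (pr2 w1) := by
    simp [hQ, Profile.updateMan]
  have hQm2 : Q.menPref m2 = mkPref (pr3 w2 w1) := by
    simp only [hQ, Profile.updateMan, Function.update_of_ne hm.symm]
    exact rothP_menPref2 hm
  have hQw1 : Q.womenPref w1 = mkPref (pr3 m2 m1) := by
    rw [hQ]; exact rothP_womenPref1 (w2 := w2)
  have hQw2 : Q.womenPref w2 = mkPref (pr3 m1 m2) := by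
    rw [hQ]; exact rothP_womenPref2 hw
  obtain ⟨⟨irm, irw⟩, hb⟩ := hs
  have hM1 : μ.menMatch m1 = some w1 ∨ μ.menMatch m1 = none := by
    refine pr2_pos ?_
    have := mkPref_le_pr (pr2 w1) (by rw [← hQm1]; exact irm m1)
    simpa [pr2_none] using this
  rcases hM1 with h1 | h1
  · exact h1
  exfalso
  have hW1 : μ.womenMatch w1 = some m2 ∨ μ.womenMatch w1 = some m1 ∨ μ.womenMatch w1 = none := by
    refine pr3_pos ?_
    have := mkPref_le_pr (pr3 m2 m1) (by rw [← hQw1]; exact irw w1)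
    simpa [pr3_none] using this
  rcases hW1 with h2 | h2 | h2
  · -- w1 ↦ m2; then look at w2
    have hm2 : μ.menMatch m2 = some w1 := (μ.consistent m2 w1).2 h2
    have hW2 : μ.womenMatch w2 = some m1 ∨ μ.womenMatch w2 = some m2 ∨ μ.womenMatch w2 = none := by
      refine pr3_pos ?_
      have := mkPref_le_pr (pr3 m1 m2) (by rw [← hQw2]; exact irw w2)
      simpa [pr3_none] using this
    rcases hW2 with h3 | h3 | h3
    · have := (μ.consistent m1 w2).2 h3
      rw [h1] at this; exact absurd this (by simp)
    · have := (μ.consistent m2 w2).2 h3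
      rw [hm2] at this
      exact hw (Option.some.inj this)
    · -- (m2,w2) blocks
      refine hb m2 w2 ⟨?_, ?_⟩
      · rw [hQm2, hm2]
        exact mkPref_lt _ (by rw [pr3_snd hw.symm, pr3_fst]; norm_num)
      · rw [hQw2, h3]
        exact mkPref_lt _ (by rw [pr3_none, pr3_snd hm]; norm_num)
  · have := (μ.consistent m1 w1).2 h2
    rw [h1] at this; exact absurd this (by simp)
  · -- (m1,w1) blocks
    refine hb m1 w1 ⟨?_, ?_⟩
    · rw [hQm1, h1]
      exact mkPref_lt _ (by rw [pr2_none, pr2_fst]; norm_num)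
    · rw [hQw1, h2]
      exact mkPref_lt _ (by rw [pr3_none, pr3_snd hm.symm]; norm_num)

end Main

end RothAux

/-- Roth's impossibility: on the unrestricted domain with at
least two men and two women, no stable matching rule is strategy-proof. -/
theorem roth_impossibility [Fintype M] [Fintype W]
    [DecidableEq M] [DecidableEq W]
    (hM : 2 ≤ Fintype.card M) (hW : 2 ≤ Fintype.card W)
    (phi : Profile M W → Matching M W)
    (hstable : StableOn (fullDomain M W) phi) :
    ¬ StrategyProofOn (fullDomain M W) phi := by
  intro hsp
  obtain ⟨m1, m2, hm⟩ := Fintype.exists_pair_of_one_lt_card (by omega : 1 < Fintype.card M)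
  obtain ⟨w1, w2, hw⟩ := Fintype.exists_pair_of_one_lt_card (by omega : 1 < Fintype.card W)
  set P := rothP m1 m2 w1 w2 with hP
  have hPmem : (fullDomain M W).mem P := ⟨fun _ => Set.mem_univ _, fun _ => Set.mem_univ _⟩
  have hφP := hstable P hPmem
  rcases rothP_stable_cases hm hw hφP with ⟨h1, _⟩ | ⟨h1, _⟩
  · -- men-optimal outcome: w1 manipulates
    set Q := P.updateWoman w1 (mkPref (pr2 m2)) with hQ
    have hQmem : (fullDomain M W).mem Q := ⟨fun _ => Set.mem_univ _, fun _ => Set.mem_univ _⟩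
    have hφQ := hstable Q hQmem
    have hBq : (phi Q).womenMatch w1 = some m2 := rothQw_stable hm hw hφQ
    have hle := (hsp P hPmem).2 w1 (mkPref (pr2 m2)) (Set.mem_univ _)
    rw [← hQ] at hle
    have hPw1 : (phi P).womenMatch w1 = some m1 := ((phi P).consistent m1 w1).1 h1
    rw [hBq, hPw1] at hle
    have hPw : P.womenPref w1 = mkPref (pr3 m2 m1) := rothP_womenPref1 (w2 := w2)
    rw [hPw] at hle
    have := mkPref_le_pr _ hle
    rw [pr3_fst, pr3_snd hm.symm] at this
    omega
  · -- women-optimal outcome: m1 manipulates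
    set Q := P.updateMan m1 (mkPref (pr2 w1)) with hQ
    have hQmem : (fullDomain M W).mem Q := ⟨fun _ => Set.mem_univ _, fun _ => Set.mem_univ _⟩
    have hφQ := hstable Q hQmem
    have hBq : (phi Q).menMatch m1 = some w1 := rothQm_stable hm hw hφQ
    have hle := (hsp P hPmem).1 m1 (mkPref (pr2 w1)) (Set.mem_univ _)
    rw [← hQ] at hle
    rw [hBq, h1] at hle
    have hPm : P.menPref m1 = mkPref (pr3 w1 w2) := rothP_menPref1 (m2 := m2)
    rw [hPm] at hle
    have := mkPref_le_pr _ hle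
    rw [pr3_fst, pr3_snd hw] at this
    omega
end
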